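/- arXiv:1904.10113 — 3 statements merged into one kernel-verified Lean document; each statement's English description precedes it below -/
import Mathlib

section
/- Consider the forced-move cops-and-robbers game on a toroidal grid C_n □ C_n with a straight-ahead orientation. Let K be a conflux and consider a position of the game, with the robber to move, in which there is one cop on each main corner of K and the robber occupies a vertex of K whose in-neighbourhood is not contained in K. Then the two corner cops have a strategy guaranteeing that the robber is captured or is confined to a stream containing K. -/
namespace CopsPaper

/-! ## Generic cops-and-robbers machinery.

A cop strategy is a function from the list of robber positions seen so far to
the new cop positions.  Quantifying over all (legal) robber position sequences
is equivalent to quantifying over all robber strategies. -/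

/-- A lazy step in a digraph: stay put or move along an arc. -/
def Step {α : Type*} (A : α → α → Prop) (u v : α) : Prop := u = v ∨ A u v

/-- The cop positions induced by a cop strategy `σ` against the robber
trajectory `rob`, in the game where the cops move first:
`cops 0 = σ []` are the initial positions, and the cops' `(t+1)`-st positions
are chosen after seeing `rob 0, …, rob t`. -/
def playCops {α ι : Type*} (σ : List α → ι → α) (rob : ℕ → α) (t : ℕ) : ι → α :=
  σ ((List.range t).map rob)

/-- `k` cops have a winning strategy in the cops-and-robbers game on the
digraph with arc relation `A` (both cops and robber may stay put or move
along an arc on their turn; the cops choose their positions first, the robber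
then chooses any starting vertex, and the cops win if at some moment a cop
occupies the robber's vertex). -/
def CopsWin {α : Type*} (A : α → α → Prop) (k : ℕ) : Prop :=
  ∃ σ : List α → Fin k → α,
    ∀ rob : ℕ → α, (∀ t, Step A (rob t) (rob (t + 1))) →
      (∀ t i, Step A (playCops σ rob t i) (playCops σ rob (t + 1) i)) ∧
      ∃ t, ∃ i, playCops σ rob t i = rob t ∨ playCops σ rob (t + 1) i = rob t

/-- The cop number of a digraph. -/
noncomputable def copNumber {α : Type*} (A : α → α → Prop) : ℕ :=
  sInf {k | CopsWin A k}

/-- Cop positions in a game played from a given position: the cops start at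
`c₀`, the robber moves first, and the cops' `(t+1)`-st positions are chosen
after seeing `rob 0, …, rob (t+1)`. -/
def copsFrom {α ι : Type*} (σ : List α → ι → α) (c₀ : ι → α) (rob : ℕ → α) :
    ℕ → ι → α
  | 0 => c₀
  | t + 1 => σ ((List.range (t + 2)).map rob)

/-- The robber is captured in the position game (robber moves first):
either a cop moves onto the robber's current vertex, or the robber moves
onto a cop. -/
def Captured {α ι : Type*} (cops : ℕ → ι → α) (rob : ℕ → α) : Prop :=
  ∃ t, ∃ i, cops t i = rob t ∨ cops t i = rob (t + 1)

/-- From the position with cops at `c₀`, robber at `r₀` and the robber to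
move (cops stepping lazily along `A`, robber stepping along `R`), the cops can
guarantee `Goal` (a predicate of the resulting cop and robber trajectories). -/
def EnsureFrom {α ι : Type*} (A R : α → α → Prop) (c₀ : ι → α) (r₀ : α)
    (Goal : (ℕ → ι → α) → (ℕ → α) → Prop) : Prop :=
  ∃ σ : List α → ι → α,
    ∀ rob : ℕ → α, rob 0 = r₀ → (∀ t, R (rob t) (rob (t + 1))) →
      (∀ t i, Step A (copsFrom σ c₀ rob t i) (copsFrom σ c₀ rob (t + 1) i)) ∧
      Goal (copsFrom σ c₀ rob) rob

/-- The robber is captured in the game where the cops move first. -/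
def CapturedG {α ι : Type*} (cops : ℕ → ι → α) (rob : ℕ → α) : Prop :=
  ∃ t, ∃ i, cops t i = rob t ∨ cops (t + 1) i = rob t

/-- In the game on the digraph `A` (cops choose their starting vertices first,
robber steps along `R`), `k` cops can guarantee `Goal`. -/
def EnsureGame {α : Type*} (A R : α → α → Prop) (k : ℕ)
    (Goal : (ℕ → Fin k → α) → (ℕ → α) → Prop) : Prop :=
  ∃ σ : List α → Fin k → α,
    ∀ rob : ℕ → α, (∀ t, R (rob t) (rob (t + 1))) →
      (∀ t i, Step A (playCops σ rob t i) (playCops σ rob (t + 1) i)) ∧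
      Goal (playCops σ rob) rob

/-- `u` can reach `v` in at most `m` (lazy) moves along the digraph `A`. -/
def ReachIn {α : Type*} (A : α → α → Prop) (m : ℕ) (u v : α) : Prop :=
  ∃ f : ℕ → α, f 0 = u ∧ f m = v ∧ ∀ t, t < m → Step A (f t) (f (t + 1))

/-! ## The toroidal grid `Cₙ □ Cₙ` with a straight-ahead orientation. -/

/-- Vertices of the toroidal grid. -/
abbrev Vtx (n : ℕ) := ZMod n × ZMod n

/-- `a` is `1` or `-1`. -/
def PM (a : ℤ) : Prop := a = 1 ∨ a = -1

/-- The straight-ahead orientation of `Cₙ □ Cₙ` determined by `δ, ε`: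
the out-neighbours of `(x, y)` are `(x + δ y, y)` and `(x, y + ε x)`. -/
def Adj {n : ℕ} (δ ε : ZMod n → ℤ) (p q : Vtx n) : Prop :=
  (q.1 = p.1 + (δ p.2 : ZMod n) ∧ q.2 = p.2) ∨
  (q.1 = p.1 ∧ q.2 = p.2 + (ε p.1 : ZMod n))

/-- The out-neighbour of `p` along its column (the first coordinate moves). -/
def vOut {n : ℕ} (δ : ZMod n → ℤ) (p : Vtx n) : Vtx n :=
  (p.1 + (δ p.2 : ZMod n), p.2)

/-- The out-neighbour of `p` along its row (the second coordinate moves). -/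
def hOut {n : ℕ} (ε : ZMod n → ℤ) (p : Vtx n) : Vtx n :=
  (p.1, p.2 + (ε p.1 : ZMod n))

/-- The type `τ(p) = (δ y, ε x)` of a vertex `p = (x, y)`. -/
def ty {n : ℕ} (δ ε : ZMod n → ℤ) (p : Vtx n) : ℤ × ℤ := (δ p.2, ε p.1)

/-- The direction `u - w` of the main diagonal of a vertex. -/
def mdDir {n : ℕ} (δ ε : ZMod n → ℤ) (p : Vtx n) : ℤ × ℤ := (δ p.2, -(ε p.1))

/-- The secondary diagonal `SD(p) = {p + r·τ(p) : r ∈ ℤ}`. -/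
def SD {n : ℕ} (δ ε : ZMod n → ℤ) (p : Vtx n) : Set (Vtx n) :=
  {q | ∃ r : ℤ, q.1 = p.1 + ((r * δ p.2 : ℤ) : ZMod n) ∧
                q.2 = p.2 + ((r * ε p.1 : ℤ) : ZMod n)}

/-- The main diagonal `MD(p) = {p + r·(u - w) : r ∈ ℤ}` where `u, w` are the
out-neighbours of `p`. -/
def MD {n : ℕ} (δ ε : ZMod n → ℤ) (p : Vtx n) : Set (Vtx n) :=
  {q | ∃ r : ℤ, q.1 = p.1 + ((r * δ p.2 : ℤ) : ZMod n) ∧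
                q.2 = p.2 - ((r * ε p.1 : ℤ) : ZMod n)}

/-- An element of `{1, -1}² ⊆ ℤ²`. -/
def IsType (d : ℤ × ℤ) : Prop := (d.1 = 1 ∨ d.1 = -1) ∧ (d.2 = 1 ∨ d.2 = -1)

/-- Orthogonality in `ℤ²`. -/
def Orth (a b : ℤ × ℤ) : Prop := a.1 * b.1 + a.2 * b.2 = 0

/-! ### Streams -/

/-- A stream: a set of consecutive columns (`vert = true`, lines indexed by
the second coordinate, with constant `δ`) or consecutive rows (`vert = false`,
lines indexed by the first coordinate, with constant `ε`), all oriented in the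
same direction, starting at index `a` and of width `w`. -/
structure Strm (n : ℕ) (δ ε : ZMod n → ℤ) where
  vert : Bool
  a : ZMod n
  w : ℕ
  one_le : 1 ≤ w
  le_n : w ≤ n
  const : ∀ i : ℕ, i < w →
    (if vert then δ else ε) (a + (i : ZMod n)) = (if vert then δ else ε) a

namespace Strm

variable {n : ℕ} {δ ε : ZMod n → ℤ}

/-- The coordinate of a vertex indexing the lines of the stream's kind. -/
def proj (S : Strm n δ ε) (p : Vtx n) : ZMod n := if S.vert then p.2 else p.1

/-- The vertex set `V(S)` of a stream. -/
def verts (S : Strm n δ ε) : Set (Vtx n) :=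
  {p | ∃ i : ℕ, i < S.w ∧ S.proj p = S.a + (i : ZMod n)}

/-- The common direction of the lines of a stream. -/
def dir (S : Strm n δ ε) : ℤ := (if S.vert then δ else ε) S.a

/-- The stream is maximal: it cannot be extended by a line on either side. -/
def IsMax (S : Strm n δ ε) : Prop :=
  S.w = n ∨ ((if S.vert then δ else ε) (S.a - 1) ≠ (if S.vert then δ else ε) S.a ∧
             (if S.vert then δ else ε) (S.a + (S.w : ZMod n)) ≠ (if S.vert then δ else ε) S.a)

/-- The vertex of the line of the stream's kind with index `b` closest to `p`. -/
def cl (S : Strm n δ ε) (b : ZMod n) (p : Vtx n) : Vtx n :=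
  if S.vert then (p.1, b) else (b, p.2)

end Strm

/-- The largest width of a stream in the grid. -/
noncomputable def maxW (n : ℕ) (δ ε : ZMod n → ℤ) : ℕ :=
  sSup {w | ∃ S : Strm n δ ε, S.w = w}

/-- The vertices of the substream `S'` of `S` formed by the lines of `S` at
distance at least `m - 1` from its boundary lines, where `m = ⌊w(S)/3⌋ + 1`. -/
def innerVerts {n : ℕ} {δ ε : ZMod n → ℤ} (S : Strm n δ ε) : Set (Vtx n) :=
  {p | ∃ i : ℕ, S.w / 3 ≤ i ∧ i + S.w / 3 ≤ S.w - 1 ∧ S.proj p = S.a + (i : ZMod n)}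

/-- The cyclic distance between two elements of `ZMod n`. -/
def cdist {n : ℕ} (a b : ZMod n) : ℕ := min (b - a).val (a - b).val

/-! ### Confluxes, corners and guard posts -/

/-- Adjacency in the underlying (undirected) grid. -/
def UAdj {n : ℕ} (δ ε : ZMod n → ℤ) (p q : Vtx n) : Prop := Adj δ ε p q ∨ Adj δ ε q p

/-- Number of neighbours of `v` inside `K`. -/
noncomputable def nbrCount {n : ℕ} (δ ε : ZMod n → ℤ) (K : Set (Vtx n)) (v : Vtx n) : ℕ :=
  {u ∈ K | UAdj δ ε v u}.ncard

/-- Number of out-neighbours of `v` inside `K`. -/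
noncomputable def outCount {n : ℕ} (δ ε : ZMod n → ℤ) (K : Set (Vtx n)) (v : Vtx n) : ℕ :=
  {u ∈ K | Adj δ ε v u}.ncard

/-- A corner of `K`: a vertex of `K` with the minimum number of neighbours in `K`. -/
def Corner {n : ℕ} (δ ε : ZMod n → ℤ) (K : Set (Vtx n)) (v : Vtx n) : Prop :=
  v ∈ K ∧ ∀ u ∈ K, nbrCount δ ε K v ≤ nbrCount δ ε K u

/-- A main corner of `K`: when `K` has four corners, a corner with an odd
number of out-neighbours in `K`; when `K` has at most two corners, every
corner is main. -/
def MainCorner {n : ℕ} (δ ε : ZMod n → ℤ) (K : Set (Vtx n)) (v : Vtx n) : Prop :=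
  Corner δ ε K v ∧ ({u | Corner δ ε K u}.ncard ≤ 2 ∨ Odd (outCount δ ε K v))

/-- A secondary corner of `K` without out-neighbours in `K`. -/
def SecNoOut {n : ℕ} (δ ε : ZMod n → ℤ) (K : Set (Vtx n)) (v : Vtx n) : Prop :=
  Corner δ ε K v ∧ ¬ MainCorner δ ε K v ∧ ∀ u ∈ K, ¬ Adj δ ε v u

/-- The terminal corner of `K`: a corner with no out-neighbours in `K`. -/
def TermCorner {n : ℕ} (δ ε : ZMod n → ℤ) (K : Set (Vtx n)) (v : Vtx n) : Prop :=
  Corner δ ε K v ∧ ∀ u ∈ K, ¬ Adj δ ε v u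

/-- The vertical guard post of `K`: the vertical out-neighbour of the main
corner of `K` whose vertical edge leaves `K` (but no other edge leaves `K`,
unless `K` has only one vertex). -/
def IsVGuard {n : ℕ} (δ ε : ZMod n → ℤ) (K : Set (Vtx n)) (g : Vtx n) : Prop :=
  ∃ v, MainCorner δ ε K v ∧ vOut δ v ∉ K ∧ (K = {v} ∨ hOut ε v ∈ K) ∧ g = vOut δ v

/-- The horizontal guard post of `K`. -/
def IsHGuard {n : ℕ} (δ ε : ZMod n → ℤ) (K : Set (Vtx n)) (g : Vtx n) : Prop :=
  ∃ v, MainCorner δ ε K v ∧ hOut ε v ∉ K ∧ (K = {v} ∨ vOut δ v ∈ K) ∧ g = hOut ε v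

/-- The terminal guard post of a (maximal) conflux `K`: the vertex outside `K`
with the same out-neighbours as the terminal corner of `K`. -/
def IsTermGuard {n : ℕ} (δ ε : ZMod n → ℤ) (K : Set (Vtx n)) (g : Vtx n) : Prop :=
  g ∉ K ∧ ∃ c, TermCorner δ ε K c ∧
    ({vOut δ g, hOut ε g} : Set (Vtx n)) = {vOut δ c, hOut ε c}

/-- The number of steps needed to reach the boundary of `K` from `p`, moving
repeatedly by `st` (the boundary is reached when the next step exits `K`). -/
noncomputable def exitDist {n : ℕ} (K : Set (Vtx n)) (p : Vtx n) (st : ℤ × ℤ) : ℕ :=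
  sInf {m : ℕ |
    (p.1 + ((((m + 1 : ℕ) : ℤ) * st.1 : ℤ) : ZMod n),
     p.2 + ((((m + 1 : ℕ) : ℤ) * st.2 : ℤ) : ZMod n)) ∉ K}

/-! ### Maximal confluxes, escape distances and shadows -/

/-- `y` and `y'` index lines of the same maximal stream (for the direction
function `f`): `f` is constant on a cyclic interval containing both. -/
def SameBlock {n : ℕ} (f : ZMod n → ℤ) (y y' : ZMod n) : Prop :=
  (∃ m : ℕ, y' = y + (m : ZMod n) ∧ ∀ i : ℕ, i ≤ m → f (y + (i : ZMod n)) = f y) ∨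
  (∃ m : ℕ, y = y' + (m : ZMod n) ∧ ∀ i : ℕ, i ≤ m → f (y' + (i : ZMod n)) = f y')

/-- The maximal conflux containing `p`. -/
def maxConflux {n : ℕ} (δ ε : ZMod n → ℤ) (p : Vtx n) : Set (Vtx n) :=
  {q | SameBlock ε q.1 p.1 ∧ SameBlock δ q.2 p.2}

/-- The horizontal escape distance: the length of a shortest directed path
from `p` to a vertex outside its maximal conflux using only arcs that change
the first coordinate. -/
noncomputable def HE {n : ℕ} (δ ε : ZMod n → ℤ) (p : Vtx n) : ℕ :=
  sInf {m : ℕ | (p.1 + (((m : ℤ) * δ p.2 : ℤ) : ZMod n), p.2) ∉ maxConflux δ ε p}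

/-- The vertical escape distance. -/
noncomputable def VE {n : ℕ} (δ ε : ZMod n → ℤ) (p : Vtx n) : ℕ :=
  sInf {m : ℕ | (p.1, p.2 + (((m : ℤ) * ε p.1 : ℤ) : ZMod n)) ∉ maxConflux δ ε p}

/-- `w` is a main shadow of `v`. -/
def IsMainShadow {n : ℕ} (δ ε : ZMod n → ℤ) (v w : Vtx n) : Prop :=
  w ∈ MD δ ε v ∧ ty δ ε w = ty δ ε v ∧ VE δ ε v = HE δ ε w

/-- `w` is a secondary shadow of `v`. -/
def IsSecShadow {n : ℕ} (δ ε : ZMod n → ℤ) (v w : Vtx n) : Prop :=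
  w ∈ SD δ ε v ∧ ty δ ε w = -(ty δ ε v) ∧ VE δ ε v = HE δ ε w

/-- `w` is a diagonal shadow of `v`. -/
def IsDiagShadow {n : ℕ} (δ ε : ZMod n → ℤ) (v w : Vtx n) : Prop :=
  IsMainShadow δ ε v w ∨ IsSecShadow δ ε v w

/-! ### `k`-regular orientations and the conflux digraph -/

/-- `f` is, after the cyclic offset `c`, constant on consecutive blocks of `k`
indices with adjacent blocks taking opposite values in `{1, -1}`.  A
straight-ahead orientation is `k`-regularly oriented iff `2k ∣ n` and both `δ`
and `ε` satisfy this for some offset. -/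
def BlockAltAt {n : ℕ} (k : ℕ) (f : ZMod n → ℤ) (c : ZMod n) : Prop :=
  ∀ m : ℕ, f (c + (m : ZMod n)) = if m / k % 2 = 0 then 1 else -1

/-- The alternating direction function of the conflux digraph
(a 1-regularly oriented grid). -/
def altF (m : ℕ) : ZMod m → ℤ := fun q => if q.val % 2 = 0 then 1 else -1

/-- The index of the block (of length `k`, after offset `c`) containing `x`. -/
def blk {n : ℕ} (k : ℕ) (c x : ZMod n) : ZMod (n / k) :=
  (((x - c).val / k : ℕ) : ZMod (n / k))

/-- The projection sending a vertex of a `k`-regularly oriented grid to the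
vertex of the conflux digraph corresponding to its maximal conflux. -/
def confMap {n : ℕ} (k : ℕ) (cδ cε : ZMod n) (p : Vtx n) : Vtx (n / k) :=
  (blk k cε p.1, blk k cδ p.2)

/-- The translated main diagonal `MD_s(v, d) = {x : x - s·(τ(v)+d)/2 ∈ MD(v)}`. -/
def MDs {n : ℕ} (δ ε : ZMod n → ℤ) (s : ℕ) (v : Vtx n) (d : ℤ × ℤ) : Set (Vtx n) :=
  {x | (x.1 - (((s : ℤ) * (((ty δ ε v).1 + d.1) / 2) : ℤ) : ZMod n),
        x.2 - (((s : ℤ) * (((ty δ ε v).2 + d.2) / 2) : ℤ) : ZMod n)) ∈ MD δ ε v}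

/-- The diagonal distance `𝔡(u, v)` between vertices of opposite types. -/
noncomputable def ddist {n : ℕ} (δ ε : ZMod n → ℤ) (u v : Vtx n) : ℕ :=
  sInf {t : ℕ | ∃ d : ℤ × ℤ, IsType d ∧ Orth (ty δ ε u) d ∧ v ∈ MDs δ ε t u d}

/-- The set `B(u, v) = ⋃_{i ≤ 𝔡(u,v)} MD_i(u, d)`, where `d` is chosen so that
`v ∈ MD_{𝔡(u,v)}(u, d)`. -/
noncomputable def BSet {n : ℕ} (δ ε : ZMod n → ℤ) (u v : Vtx n) : Set (Vtx n) :=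
  {x | ∃ d : ℤ × ℤ, IsType d ∧ Orth (ty δ ε u) d ∧ v ∈ MDs δ ε (ddist δ ε u v) u d ∧
       ∃ i : ℕ, i ≤ ddist δ ε u v ∧ x ∈ MDs δ ε i u d}

/-! ### Mirrors -/

/-- The mirror of the diagonal shadow given by a robber at `v` and a cop at `c`:
the diagonal line through `(v₁, c₂)` with direction `d`. -/
def MirrorOf {n : ℕ} (v c : Vtx n) (d : ℤ × ℤ) : Set (Vtx n) :=
  {p | ∃ r : ℤ, p.1 = v.1 + ((r * d.1 : ℤ) : ZMod n) ∧ p.2 = c.2 + ((r * d.2 : ℤ) : ZMod n)}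

/-- Translation of a set of grid vertices by an integer vector. -/
def shiftSet {n : ℕ} (w : ℤ × ℤ) (L : Set (Vtx n)) : Set (Vtx n) :=
  (fun p : Vtx n => (p.1 + (w.1 : ZMod n), p.2 + (w.2 : ZMod n))) '' L


/-!
Inside the conflux `X ×ˢ Y` every column points towards the exit row `cycEnd a W d₁` and every
row towards the exit column `cycEnd b H d₂`. Say the robber enters through the entry column (the
other case is the same after swapping coordinates). The main corner on the exit row copies every
row move of the robber, so it stays in his column and he cannot reach the exit row without being
caught. The other main corner, on the entry row and the exit column, waits: while the robber's
column lies in `Y`, his column moves point towards the exit row, away from the entry row. When he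
reaches the exit column, this cop is in his column and from then on copies his row moves as
well, guarding the entry row. So the robber never leaves the rows `X` of the row stream.
-/

section Strategies

variable {α β ι : Type*}

def ruleTraj (f : α → α → α → α) (c : α) (rob : ℕ → α) : ℕ → α
  | 0 => c
  | t + 1 => f (ruleTraj f c rob t) (rob t) (rob (t + 1))

def ruleStrategy (f : α → α → α → α) (c₀ : ι → α) (l : List α) (i : ι) : α :=
  ruleTraj f (c₀ i) (fun k => l.getD k (c₀ i)) (l.length - 1)

lemma ruleTraj_congr (f : α → α → α → α) (c : α) {rob rob' : ℕ → α} {T : ℕ}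
    (h : ∀ k ≤ T, rob k = rob' k) : ruleTraj f c rob T = ruleTraj f c rob' T := by
  induction T with
  | zero => rfl
  | succ t ih =>
    simp only [ruleTraj]
    rw [ih fun k hk => h k (by omega), h t (by omega), h (t + 1) le_rfl]

lemma copsFrom_ruleStrategy (f : α → α → α → α) (c₀ : ι → α) (rob : ℕ → α) :
    copsFrom (ruleStrategy f c₀) c₀ rob = fun t i => ruleTraj f (c₀ i) rob t := by
  funext t i
  cases t with
  | zero => rfl
  | succ t =>
    simp only [copsFrom, ruleStrategy, List.length_map, List.length_range]
    refine ruleTraj_congr f _ fun k hk => ?_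
    simp [List.getD_eq_getElem?_getD, List.getElem?_range (show k < t + 2 by omega)]

theorem EnsureFrom.of_rule {A R : α → α → Prop} {c₀ : ι → α} {r₀ : α}
    {Goal : (ℕ → ι → α) → (ℕ → α) → Prop} (f : α → α → α → α)
    (hf : ∀ c r r', Step A c (f c r r'))
    (h : ∀ rob : ℕ → α, rob 0 = r₀ → (∀ t, R (rob t) (rob (t + 1))) →
      Goal (fun t i => ruleTraj f (c₀ i) rob t) rob) :
    EnsureFrom A R c₀ r₀ Goal :=
  ⟨ruleStrategy f c₀, fun rob h0 hR => by
    rw [copsFrom_ruleStrategy]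
    exact ⟨fun _ _ => hf _ _ _, h rob h0 hR⟩⟩

theorem EnsureFrom.mono {A R : α → α → Prop} {c₀ : ι → α} {r₀ : α}
    {Goal Goal' : (ℕ → ι → α) → (ℕ → α) → Prop} (h : EnsureFrom A R c₀ r₀ Goal)
    (hG : ∀ cops rob, Goal cops rob → Goal' cops rob) : EnsureFrom A R c₀ r₀ Goal' := by
  obtain ⟨σ, hσ⟩ := h
  exact ⟨σ, fun rob h0 hR => (hσ rob h0 hR).imp_right (hG _ _)⟩

theorem EnsureFrom.of_forall {A R : α → α → Prop} {c₀ : ι → α} {r₀ : α}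
    {Goal : (ℕ → ι → α) → (ℕ → α) → Prop} (h : ∀ cops rob, Goal cops rob) :
    EnsureFrom A R c₀ r₀ Goal :=
  EnsureFrom.of_rule (fun c _ _ => c) (fun _ _ _ => Or.inl rfl) fun _ _ _ => h _ _

theorem EnsureFrom.of_equiv {A R : α → α → Prop} {A' R' : β → β → Prop} (e : α ≃ β)
    (hA : ∀ x y, A' (e x) (e y) → A x y) (hR : ∀ x y, R x y → R' (e x) (e y))
    {c₀ : ι → α} {r₀ : α} {Goal : (ℕ → ι → α) → (ℕ → α) → Prop}
    {Goal' : (ℕ → ι → β) → (ℕ → β) → Prop}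
    (hG : ∀ cops rob, Goal' (fun t i => e (cops t i)) (fun t => e (rob t)) → Goal cops rob)
    (h : EnsureFrom A' R' (fun i => e (c₀ i)) (e r₀) Goal') :
    EnsureFrom A R c₀ r₀ Goal := by
  obtain ⟨σ, hσ⟩ := h
  refine ⟨fun l i => e.symm (σ (l.map e) i), fun rob h0 hrob => ?_⟩
  obtain ⟨hleg, hgoal⟩ := hσ (fun t => e (rob t)) (by rw [h0]) fun t => hR _ _ (hrob t)
  have key : ∀ t i, e (copsFrom (fun l i => e.symm (σ (l.map e) i)) c₀ rob t i) =
      copsFrom σ (fun i => e (c₀ i)) (fun t => e (rob t)) t i := by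
    rintro (_ | t) i
    · rfl
    · simp [copsFrom, List.map_map, Function.comp_def]
  refine ⟨fun t i => ?_, hG _ _ (by simpa only [key] using hgoal)⟩
  have hstep := hleg t i
  rw [← key, ← key] at hstep
  rcases hstep with h | h
  · exact Or.inl (e.injective h)
  · exact Or.inr (hA _ _ h)

lemma Captured.of_map {cops : ℕ → ι → α} {rob : ℕ → α} {e : α → β} (he : Function.Injective e)
    (h : Captured (fun t i => e (cops t i)) (fun t => e (rob t))) : Captured cops rob := by
  obtain ⟨t, i, h⟩ := h
  exact ⟨t, i, h.imp (fun h => he h) (fun h => he h)⟩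

end Strategies

lemma PM.neg {d : ℤ} (h : PM d) : PM (-d) := by
  rcases h with rfl | rfl
  · exact Or.inr rfl
  · exact Or.inl rfl

lemma PM.eq_or_eq_neg {d e : ℤ} (hd : PM d) (he : PM e) : d = e ∨ d = -e := by
  rcases hd with rfl | rfl <;> rcases he with rfl | rfl <;> simp

section CycInterval

variable {n : ℕ} {a y : ZMod n} {w : ℕ} {d : ℤ}

def cycInterval (a : ZMod n) (w : ℕ) : Set (ZMod n) := {y | ∃ i : ℕ, i < w ∧ y = a + i}

/-- The last element of `cycInterval a w` in the direction `d = ±1`; `cycEnd a w (-d)` is the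
first one. -/
def cycEnd (a : ZMod n) (w : ℕ) (d : ℤ) : ZMod n :=
  if d = 1 then a + ((w - 1 : ℕ) : ZMod n) else a

lemma pos_of_mem_cycInterval (hy : y ∈ cycInterval a w) : 0 < w := by
  obtain ⟨i, hi, -⟩ := hy
  omega

lemma cycEnd_mem (hw : 0 < w) : cycEnd a w d ∈ cycInterval a w := by
  unfold cycEnd
  split_ifs
  · exact ⟨w - 1, by omega, rfl⟩
  · exact ⟨0, hw, by simp⟩

lemma cycInterval_subset_singleton (hw : w ≤ 1) : cycInterval a w ⊆ {a} := by
  rintro _ ⟨i, hi, rfl⟩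
  obtain rfl : i = 0 := by omega
  simp

lemma cycEnd_of_le_one (hw : w ≤ 1) : cycEnd a w d = a := by
  simp [cycEnd, show w - 1 = 0 by omega]

lemma cycInterval_eq_univ [NeZero n] : cycInterval a n = Set.univ :=
  Set.eq_univ_of_forall fun y => ⟨(y - a).val, ZMod.val_lt _, by simp⟩

lemma add_mem_cycInterval (hd : PM d) (hy : y ∈ cycInterval a w) (hne : y ≠ cycEnd a w d) :
    y + (d : ZMod n) ∈ cycInterval a w := by
  obtain ⟨i, hi, rfl⟩ := hy
  rcases hd with rfl | rfl
  · have : i ≠ w - 1 := by rintro rfl; exact hne (by simp [cycEnd])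
    exact ⟨i + 1, by omega, by push_cast; ring⟩
  · have : i ≠ 0 := by rintro rfl; exact hne (by simp [cycEnd])
    exact ⟨i - 1, by omega, by rw [Nat.cast_sub (by omega)]; push_cast; ring⟩

lemma eq_cycEnd_of_add_notMem (hd : PM d) (hy : y ∈ cycInterval a w)
    (h : y + (d : ZMod n) ∉ cycInterval a w) : y = cycEnd a w d :=
  by_contra fun hne => h (add_mem_cycInterval hd hy hne)

lemma cycEnd_add_notMem (hd : PM d) (hw : w < n) :
    cycEnd a w d + (d : ZMod n) ∉ cycInterval a w := by
  rintro ⟨i, hi, h⟩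
  rcases hd with rfl | rfl
  · have h' : ((w - 1 + 1 : ℕ) : ZMod n) = i := by
      push_cast; simpa [cycEnd, add_assoc] using h
    rw [ZMod.natCast_eq_natCast_iff', Nat.mod_eq_of_lt (by omega), Nat.mod_eq_of_lt (by omega)]
      at h'
    omega
  · have h' : ((i + 1 : ℕ) : ZMod n) = 0 := by
      push_cast; simp [cycEnd] at h; linear_combination -h
    rw [ZMod.natCast_eq_zero_iff] at h'
    exact absurd (Nat.le_of_dvd (by omega) h') (by omega)

lemma cycEnd_neg_ne (hd : PM d) (hw : 2 ≤ w) (hwn : w ≤ n) : cycEnd a w (-d) ≠ cycEnd a w d := by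
  have key : a + ((w - 1 : ℕ) : ZMod n) ≠ a := by
    intro h
    have h' : ((w - 1 : ℕ) : ZMod n) = 0 := by linear_combination h
    rw [ZMod.natCast_eq_zero_iff] at h'
    exact absurd (Nat.le_of_dvd (by omega) h') (by omega)
  rcases hd with rfl | rfl
  · simpa [cycEnd] using key.symm
  · simpa [cycEnd] using key

end CycInterval

section CycNbrCount

variable {n : ℕ} {a y : ZMod n} {w : ℕ} {d : ℤ}

noncomputable def cycNbrCount (I : Set (ZMod n)) (y : ZMod n) : ℕ := ({y + 1, y - 1} ∩ I).ncard

lemma pair_add_sub_eq (hd : PM d) (y : ZMod n) :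
    ({y + (d : ZMod n), y - d} : Set (ZMod n)) = {y + 1, y - 1} := by
  rcases hd with rfl | rfl
  · simp
  · rw [Set.pair_comm]; push_cast; ring_nf

lemma finite_pair_inter (y : ZMod n) (I : Set (ZMod n)) : ({y + 1, y - 1} ∩ I).Finite :=
  (Set.toFinite _).inter_of_left I

lemma notMem_pair_self [Fact (1 < n)] (y : ZMod n) : y ∉ ({y + 1, y - 1} : Set (ZMod n)) := by
  simp only [Set.mem_insert_iff, Set.mem_singleton_iff, not_or]
  constructor <;> intro h
  · exact one_ne_zero (by linear_combination -h : (1 : ZMod n) = 0)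
  · exact one_ne_zero (by linear_combination h : (1 : ZMod n) = 0)

lemma cycNbrCount_cycEnd_le [Fact (1 < n)] (hd : PM d) (hw : w < n) :
    cycNbrCount (cycInterval a w) (cycEnd a w d) ≤ min 1 (w - 1) := by
  unfold cycNbrCount
  rcases Nat.lt_or_ge w 2 with hw2 | hw2
  · have hempty : {cycEnd a w d + 1, cycEnd a w d - 1} ∩ cycInterval a w = ∅ := by
      rw [cycEnd_of_le_one (by omega)]
      refine Set.eq_empty_of_forall_notMem fun z ⟨hz, hzI⟩ => ?_
      obtain rfl := cycInterval_subset_singleton (by omega) hzI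
      exact notMem_pair_self z hz
    simp [hempty]
  · have hsub : {cycEnd a w d + 1, cycEnd a w d - 1} ∩ cycInterval a w ⊆
        {cycEnd a w d - (d : ZMod n)} := by
      rw [← pair_add_sub_eq hd]
      rintro z ⟨rfl | rfl, hz⟩
      · exact absurd hz (cycEnd_add_notMem hd hw)
      · rfl
    calc _ ≤ ({cycEnd a w d - (d : ZMod n)} : Set (ZMod n)).ncard :=
          Set.ncard_le_ncard hsub (Set.toFinite _)
      _ = min 1 (w - 1) := by rw [Set.ncard_singleton]; omega

lemma min_le_cycNbrCount (hwn : w ≤ n) (hy : y ∈ cycInterval a w) :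
    min 1 (w - 1) ≤ cycNbrCount (cycInterval a w) y := by
  rcases Nat.lt_or_ge w 2 with hw2 | hw2
  · omega
  have hne : ({y + 1, y - 1} ∩ cycInterval a w).Nonempty := by
    by_cases hy1 : y = cycEnd a w 1
    · have h := add_mem_cycInterval (PM.neg (Or.inl rfl)) hy
        (hy1 ▸ (cycEnd_neg_ne (Or.inl rfl) hw2 hwn).symm)
      refine ⟨_, ?_, h⟩
      push_cast
      simp [← sub_eq_add_neg]
    · exact ⟨y + 1, by simp, by simpa using add_mem_cycInterval (Or.inl rfl) hy hy1⟩
  have := (Set.ncard_pos (finite_pair_inter y _)).2 hne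
  unfold cycNbrCount
  omega

lemma eq_cycEnd_of_cycNbrCount_le_one (hw : w < n) (hy : y ∈ cycInterval a w)
    (h : cycNbrCount (cycInterval a w) y ≤ 1) : y = cycEnd a w 1 ∨ y = cycEnd a w (-1) := by
  by_contra! hne
  rcases Nat.lt_or_ge w 2 with hw2 | hw2
  · have := cycInterval_subset_singleton (by omega) hy
    exact hne.2 (by rw [cycEnd_of_le_one (by omega)]; simpa using this)
  have hsucc := add_mem_cycInterval (Or.inl rfl) hy hne.1
  have hpred := add_mem_cycInterval (PM.neg (Or.inl rfl)) hy hne.2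
  push_cast at hsucc hpred
  have hdist : y + 1 ≠ y - 1 := by
    intro h'
    have h2 : ((2 : ℕ) : ZMod n) = 0 := by push_cast; linear_combination h'
    rw [ZMod.natCast_eq_zero_iff] at h2
    exact absurd (Nat.le_of_dvd (by omega) h2) (by omega)
  have : ({y + 1, y - 1} ∩ cycInterval a w) = {y + 1, y - 1} :=
    Set.inter_eq_left.2 (Set.pair_subset hsucc (by simpa [← sub_eq_add_neg] using hpred))
  unfold cycNbrCount at h
  rw [this, Set.ncard_pair hdist] at h
  omega

end CycNbrCount

section Grid

variable {n : ℕ} {δ ε : ZMod n → ℤ} {p q : Vtx n}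

lemma adj_iff : Adj δ ε p q ↔ q = vOut δ p ∨ q = hOut ε p := by
  simp only [Adj, vOut, hOut, Prod.ext_iff]

lemma adj_swap_iff : Adj ε δ p.swap q.swap ↔ Adj δ ε p q := by
  simp only [Adj, Prod.fst_swap, Prod.snd_swap]
  tauto

lemma uadj_iff (hδ : PM (δ p.2)) (hε : PM (ε p.1)) :
    UAdj δ ε p q ↔ (q.1 ∈ ({p.1 + 1, p.1 - 1} : Set (ZMod n)) ∧ q.2 = p.2) ∨
      (q.1 = p.1 ∧ q.2 ∈ ({p.2 + 1, p.2 - 1} : Set (ZMod n))) := by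
  obtain ⟨x, y⟩ := p
  obtain ⟨x', y'⟩ := q
  rw [← pair_add_sub_eq hδ, ← pair_add_sub_eq hε]
  simp only [UAdj, Adj, Set.mem_insert_iff, Set.mem_singleton_iff]
  constructor
  · rintro ((⟨h, rfl⟩ | ⟨rfl, h⟩) | (⟨h, rfl⟩ | ⟨rfl, h⟩))
    · exact Or.inl ⟨Or.inl h, rfl⟩
    · exact Or.inr ⟨rfl, Or.inl h⟩
    · exact Or.inl ⟨Or.inr (by linear_combination -h), rfl⟩
    · exact Or.inr ⟨rfl, Or.inr (by linear_combination -h)⟩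
  · rintro (⟨h | h, rfl⟩ | ⟨rfl, h | h⟩)
    · exact Or.inl (Or.inl ⟨h, rfl⟩)
    · exact Or.inr (Or.inl ⟨by linear_combination -h, rfl⟩)
    · exact Or.inl (Or.inr ⟨rfl, h⟩)
    · exact Or.inr (Or.inr ⟨rfl, by linear_combination -h⟩)

lemma outCount_eq_one_of_xor {K : Set (Vtx n)} {p : Vtx n}
    (h : Xor (vOut δ p ∈ K) (hOut ε p ∈ K)) : outCount δ ε K p = 1 := by
  rw [outCount, Set.ncard_eq_one]
  rcases h with ⟨hv, hh⟩ | ⟨hh, hv⟩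
  · refine ⟨vOut δ p, Set.ext fun u => ⟨?_, ?_⟩⟩
    · rintro ⟨hu, hadj⟩
      rcases adj_iff.1 hadj with rfl | rfl
      exacts [rfl, absurd hu hh]
    · rintro rfl
      exact ⟨hv, adj_iff.2 (Or.inl rfl)⟩
  · refine ⟨hOut ε p, Set.ext fun u => ⟨?_, ?_⟩⟩
    · rintro ⟨hu, hadj⟩
      rcases adj_iff.1 hadj with rfl | rfl
      exacts [absurd hu hv, rfl]
    · rintro rfl
      exact ⟨hh, adj_iff.2 (Or.inr rfl)⟩

end Grid

/-- `X` indexes the rows and `Y` the columns of the conflux `X ×ˢ Y`; arcs along a column change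
the first coordinate. -/
structure IsConflux {n : ℕ} (δ ε : ZMod n → ℤ) (X Y : Set (ZMod n)) (d₁ d₂ : ℤ) : Prop where
  pm_fst : PM d₁
  pm_snd : PM d₂
  δ_eq : ∀ y ∈ Y, δ y = d₁
  ε_eq : ∀ x ∈ X, ε x = d₂

lemma IsConflux.swap {n : ℕ} {δ ε : ZMod n → ℤ} {X Y : Set (ZMod n)} {d₁ d₂ : ℤ}
    (h : IsConflux δ ε X Y d₁ d₂) : IsConflux ε δ Y X d₂ d₁ :=
  ⟨h.pm_snd, h.pm_fst, h.ε_eq, h.δ_eq⟩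

lemma IsConflux.entry_of_adj_notMem {n : ℕ} {δ ε : ZMod n → ℤ} {a b : ZMod n} {W H : ℕ}
    {d₁ d₂ : ℤ} (hK : IsConflux δ ε (cycInterval a W) (cycInterval b H) d₁ d₂) {u r : Vtx n}
    (hr : r ∈ cycInterval a W ×ˢ cycInterval b H) (hu : Adj δ ε u r)
    (huK : u ∉ cycInterval a W ×ˢ cycInterval b H) :
    r.1 = cycEnd a W (-d₁) ∨ r.2 = cycEnd b H (-d₂) := by
  rcases adj_iff.1 hu with rfl | rfl
  · refine Or.inl (eq_cycEnd_of_add_notMem hK.pm_fst.neg hr.1 fun h => huK ⟨?_, hr.2⟩)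
    have hd : δ u.2 = d₁ := hK.δ_eq _ hr.2
    simpa [vOut, hd] using h
  · refine Or.inr (eq_cycEnd_of_add_notMem hK.pm_snd.neg hr.2 fun h => huK ⟨hr.1, ?_⟩)
    have hd : ε u.1 = d₂ := hK.ε_eq _ hr.1
    simpa [hOut, hd] using h

section Streams

variable {n : ℕ} {δ ε : ZMod n → ℤ} {S S₁ S₂ : Strm n δ ε} {p : Vtx n}

lemma Strm.mem_verts_of_vert (h : S.vert = true) : p ∈ S.verts ↔ p.2 ∈ cycInterval S.a S.w := by
  simp [Strm.verts, Strm.proj, h, cycInterval]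

lemma Strm.mem_verts_of_not_vert (h : S.vert = false) :
    p ∈ S.verts ↔ p.1 ∈ cycInterval S.a S.w := by
  simp [Strm.verts, Strm.proj, h, cycInterval]

lemma Strm.mem_verts_of_w_eq (hw : S.w = n) : p ∈ S.verts := by
  have : NeZero n := ⟨by have := S.one_le; omega⟩
  cases h : S.vert
  · simp [Strm.mem_verts_of_not_vert h, hw, cycInterval_eq_univ]
  · simp [Strm.mem_verts_of_vert h, hw, cycInterval_eq_univ]

lemma Strm.verts_inter_verts (h₁ : S₁.vert = true) (h₂ : S₂.vert = false) :
    S₁.verts ∩ S₂.verts = cycInterval S₂.a S₂.w ×ˢ cycInterval S₁.a S₁.w := by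
  ext p
  simp [Strm.mem_verts_of_vert h₁, Strm.mem_verts_of_not_vert h₂, and_comm]

lemma Strm.isConflux (hδ : ∀ y, PM (δ y)) (hε : ∀ x, PM (ε x))
    (h₁ : S₁.vert = true) (h₂ : S₂.vert = false) :
    IsConflux δ ε (cycInterval S₂.a S₂.w) (cycInterval S₁.a S₁.w) S₁.dir S₂.dir where
  pm_fst := by simpa [Strm.dir, h₁] using hδ S₁.a
  pm_snd := by simpa [Strm.dir, h₂] using hε S₂.a
  δ_eq := by
    rintro _ ⟨i, hi, rfl⟩
    simpa [Strm.dir, h₁] using S₁.const i hi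
  ε_eq := by
    rintro _ ⟨i, hi, rfl⟩
    simpa [Strm.dir, h₂] using S₂.const i hi

end Streams

section Corners

variable {n : ℕ} [Fact (1 < n)] {δ ε : ZMod n → ℤ} {d₁ d₂ : ℤ}

lemma nbrCount_prod {X Y : Set (ZMod n)} (hK : IsConflux δ ε X Y d₁ d₂) {p : Vtx n}
    (hp : p ∈ X ×ˢ Y) : nbrCount δ ε (X ×ˢ Y) p = cycNbrCount X p.1 + cycNbrCount Y p.2 := by
  have hδ : PM (δ p.2) := hK.δ_eq _ hp.2 ▸ hK.pm_fst
  have hε : PM (ε p.1) := hK.ε_eq _ hp.1 ▸ hK.pm_snd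
  have hset : {u | u ∈ X ×ˢ Y ∧ UAdj δ ε p u} =
      ({p.1 + 1, p.1 - 1} ∩ X) ×ˢ {p.2} ∪ {p.1} ×ˢ ({p.2 + 1, p.2 - 1} ∩ Y) := by
    ext ⟨x, y⟩
    simp only [Set.mem_ofPred_eq, uadj_iff hδ hε, Set.mem_union, Set.mem_prod,
      Set.mem_inter_iff, Set.mem_singleton_iff]
    constructor
    · rintro ⟨⟨hx, hy⟩, ⟨h, rfl⟩ | ⟨rfl, h⟩⟩
      · exact Or.inl ⟨⟨h, hx⟩, rfl⟩
      · exact Or.inr ⟨rfl, h, hy⟩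
    · rintro (⟨⟨h, hx⟩, rfl⟩ | ⟨rfl, h, hy⟩)
      · exact ⟨⟨hx, hp.2⟩, Or.inl ⟨h, rfl⟩⟩
      · exact ⟨⟨hp.1, hy⟩, Or.inr ⟨rfl, h⟩⟩
  have hdisj : Disjoint (({p.1 + 1, p.1 - 1} ∩ X) ×ˢ {p.2})
      ({p.1} ×ˢ ({p.2 + 1, p.2 - 1} ∩ Y)) := by
    refine Set.disjoint_left.2 fun u hu hu' => notMem_pair_self p.2 ?_
    simpa [Set.mem_singleton_iff.1 hu.2] using hu'.2.1
  rw [nbrCount, hset, Set.ncard_union_eq hdisj, Set.ncard_prod, Set.ncard_prod]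
  simp [cycNbrCount]

variable {a b : ZMod n} {W H : ℕ}

lemma corner_cycEnd (hK : IsConflux δ ε (cycInterval a W) (cycInterval b H) d₁ d₂)
    (hW : W < n) (hH : H < n) (hW0 : 0 < W) (hH0 : 0 < H) {d d' : ℤ} (hd : PM d) (hd' : PM d') :
    Corner δ ε (cycInterval a W ×ˢ cycInterval b H) (cycEnd a W d, cycEnd b H d') := by
  have hmem : (cycEnd a W d, cycEnd b H d') ∈ cycInterval a W ×ˢ cycInterval b H :=
    ⟨cycEnd_mem hW0, cycEnd_mem hH0⟩
  refine ⟨hmem, fun u hu => ?_⟩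
  rw [nbrCount_prod hK hmem, nbrCount_prod hK hu]
  exact add_le_add ((cycNbrCount_cycEnd_le hd hW).trans (min_le_cycNbrCount hW.le hu.1))
    ((cycNbrCount_cycEnd_le hd' hH).trans (min_le_cycNbrCount hH.le hu.2))

lemma cycNbrCount_add_le_of_corner (hK : IsConflux δ ε (cycInterval a W) (cycInterval b H) d₁ d₂)
    (hW : W < n) (hH : H < n) {u : Vtx n}
    (hu : Corner δ ε (cycInterval a W ×ˢ cycInterval b H) u) :
    cycNbrCount (cycInterval a W) u.1 + cycNbrCount (cycInterval b H) u.2 ≤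
      min 1 (W - 1) + min 1 (H - 1) := by
  have hmem : (cycEnd a W 1, cycEnd b H 1) ∈ cycInterval a W ×ˢ cycInterval b H :=
    Set.mk_mem_prod (cycEnd_mem (pos_of_mem_cycInterval hu.1.1))
      (cycEnd_mem (pos_of_mem_cycInterval hu.1.2))
  have hcorner := hu.2 _ hmem
  rw [nbrCount_prod hK hu.1, nbrCount_prod hK hmem] at hcorner
  have h1 : cycNbrCount (cycInterval a W) (cycEnd a W 1) ≤ min 1 (W - 1) :=
    cycNbrCount_cycEnd_le (Or.inl rfl) hW
  have h2 : cycNbrCount (cycInterval b H) (cycEnd b H 1) ≤ min 1 (H - 1) :=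
    cycNbrCount_cycEnd_le (Or.inl rfl) hH
  exact hcorner.trans (add_le_add h1 h2)

lemma ncard_corners_le_two (hK : IsConflux δ ε (cycInterval a W) (cycInterval b H) d₁ d₂)
    (hW : W < n) (hH : H < n) (h : W = 1 ∨ H = 1) :
    {u | Corner δ ε (cycInterval a W ×ˢ cycInterval b H) u}.ncard ≤ 2 := by
  suffices ∃ x y : Vtx n, {u | Corner δ ε (cycInterval a W ×ˢ cycInterval b H) u} ⊆ {x, y} by
    obtain ⟨x, y, hsub⟩ := this
    exact (Set.ncard_le_ncard hsub (Set.toFinite _)).trans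
      ((Set.ncard_insert_le _ _).trans (by rw [Set.ncard_singleton]))
  rcases h with rfl | rfl
  · refine ⟨(a, cycEnd b H 1), (a, cycEnd b H (-1)), fun u hu => ?_⟩
    have hle := cycNbrCount_add_le_of_corner hK hW hH hu
    obtain ⟨x, y⟩ := u
    have hx : x = a := cycInterval_subset_singleton le_rfl hu.1.1
    simpa [hx] using eq_cycEnd_of_cycNbrCount_le_one hH hu.1.2 (by omega)
  · refine ⟨(cycEnd a W 1, b), (cycEnd a W (-1), b), fun u hu => ?_⟩
    have hle := cycNbrCount_add_le_of_corner hK hW hH hu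
    obtain ⟨x, y⟩ := u
    have hy : y = b := cycInterval_subset_singleton le_rfl hu.1.2
    simpa [hy] using eq_cycEnd_of_cycNbrCount_le_one hW hu.1.1 (by omega)

lemma mainCorner_exit_entry (hK : IsConflux δ ε (cycInterval a W) (cycInterval b H) d₁ d₂)
    (hW : W < n) (hH : H < n) (hW0 : 0 < W) (hH0 : 0 < H) :
    MainCorner δ ε (cycInterval a W ×ˢ cycInterval b H) (cycEnd a W d₁, cycEnd b H (-d₂)) := by
  refine ⟨corner_cycEnd hK hW hH hW0 hH0 hK.pm_fst hK.pm_snd.neg, ?_⟩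
  by_cases hH1 : H = 1
  · exact Or.inl (ncard_corners_le_two hK hW hH (Or.inr hH1))
  suffices hxor : Xor (vOut δ (cycEnd a W d₁, cycEnd b H (-d₂)) ∈
      cycInterval a W ×ˢ cycInterval b H)
      (hOut ε (cycEnd a W d₁, cycEnd b H (-d₂)) ∈ cycInterval a W ×ˢ cycInterval b H) by
    rw [outCount_eq_one_of_xor hxor]
    exact Or.inr odd_one
  refine Or.inr ⟨⟨cycEnd_mem hW0, ?_⟩, fun hv => ?_⟩
  · show cycEnd b H (-d₂) + (ε (cycEnd a W d₁) : ZMod n) ∈ cycInterval b H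
    rw [hK.ε_eq _ (cycEnd_mem hW0)]
    exact add_mem_cycInterval hK.pm_snd (cycEnd_mem hH0) (cycEnd_neg_ne hK.pm_snd (by omega) hH.le)
  · have hv1 : cycEnd a W d₁ + (δ (cycEnd b H (-d₂)) : ZMod n) ∈ cycInterval a W := hv.1
    rw [hK.δ_eq _ (cycEnd_mem hH0)] at hv1
    exact cycEnd_add_notMem hK.pm_fst hW hv1

lemma mainCorner_entry_exit (hK : IsConflux δ ε (cycInterval a W) (cycInterval b H) d₁ d₂)
    (hW : W < n) (hH : H < n) (hW0 : 0 < W) (hH0 : 0 < H) :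
    MainCorner δ ε (cycInterval a W ×ˢ cycInterval b H) (cycEnd a W (-d₁), cycEnd b H d₂) := by
  refine ⟨corner_cycEnd hK hW hH hW0 hH0 hK.pm_fst.neg hK.pm_snd, ?_⟩
  by_cases hW1 : W = 1
  · exact Or.inl (ncard_corners_le_two hK hW hH (Or.inl hW1))
  suffices hxor : Xor (vOut δ (cycEnd a W (-d₁), cycEnd b H d₂) ∈
      cycInterval a W ×ˢ cycInterval b H)
      (hOut ε (cycEnd a W (-d₁), cycEnd b H d₂) ∈ cycInterval a W ×ˢ cycInterval b H) by
    rw [outCount_eq_one_of_xor hxor]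
    exact Or.inr odd_one
  refine Or.inl ⟨⟨?_, cycEnd_mem hH0⟩, fun hh => ?_⟩
  · show cycEnd a W (-d₁) + (δ (cycEnd b H d₂) : ZMod n) ∈ cycInterval a W
    rw [hK.δ_eq _ (cycEnd_mem hH0)]
    exact add_mem_cycInterval hK.pm_fst (cycEnd_mem hW0) (cycEnd_neg_ne hK.pm_fst (by omega) hW.le)
  · have hh2 : cycEnd b H d₂ + (ε (cycEnd a W (-d₁)) : ZMod n) ∈ cycInterval b H := hh.2
    rw [hK.ε_eq _ (cycEnd_mem hW0)] at hh2
    exact cycEnd_add_notMem hK.pm_snd hH hh2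

end Corners

section Shadow

variable {n : ℕ} {δ ε : ZMod n → ℤ}

def shadowStep (ε : ZMod n → ℤ) (c r r' : Vtx n) : Vtx n :=
  if c.2 = r.2 ∧ r' = hOut ε r then hOut ε c else c

lemma step_shadowStep (c r r' : Vtx n) : Step (Adj δ ε) c (shadowStep ε c r r') := by
  unfold shadowStep
  split_ifs
  · exact Or.inr (adj_iff.2 (Or.inr rfl))
  · exact Or.inl rfl

variable (a : ZMod n) (W : ℕ) (b : ZMod n) (H : ℕ) (d₁ d₂ : ℤ)

def ShadowInv (c₁ c₂ r : Vtx n) : Prop :=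
  r.1 ∈ cycInterval a W ∧ c₁ = (cycEnd a W d₁, r.2) ∧
    ((r.2 ∈ cycInterval b H ∧ c₂ = (cycEnd a W (-d₁), cycEnd b H d₂)) ∨
      c₂ = (cycEnd a W (-d₁), r.2))

variable {a W b H d₁ d₂}

lemma ShadowInv.step (hK : IsConflux δ ε (cycInterval a W) (cycInterval b H) d₁ d₂)
    (hδ : ∀ y, δ y = d₁ ∨ δ y = -d₁) {c₁ c₂ r r' : Vtx n}
    (hinv : ShadowInv a W b H d₁ d₂ c₁ c₂ r) (hr : Adj δ ε r r') (h₁ : c₁ ≠ r) (h₂ : c₂ ≠ r) :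
    ShadowInv a W b H d₁ d₂ (shadowStep ε c₁ r r') (shadowStep ε c₂ r r') r' := by
  obtain ⟨hrX, rfl, hc₂⟩ := hinv
  have hW0 := pos_of_mem_cycInterval hrX
  have hεr : ε r.1 = d₂ := hK.ε_eq _ hrX
  by_cases hrow : r' = hOut ε r
  · subst hrow
    have hεe {d : ℤ} : ε (cycEnd a W d) = d₂ := hK.ε_eq _ (cycEnd_mem hW0)
    refine ⟨hrX, by simp [shadowStep, hOut, hεe, hεr], ?_⟩
    rcases hc₂ with ⟨hrY, rfl⟩ | rfl
    · by_cases hy : r.2 = cycEnd b H d₂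
      · right
        simp [shadowStep, hOut, hεe, hεr, hy]
      · left
        refine ⟨?_, by simp [shadowStep, Ne.symm hy]⟩
        simpa [hOut, hεr] using add_mem_cycInterval hK.pm_snd hrY hy
    · right
      simp [shadowStep, hOut, hεe, hεr]
  · have hcol : r' = vOut δ r := (adj_iff.1 hr).resolve_right hrow
    have hstay (c : Vtx n) : shadowStep ε c r r' = c := if_neg fun h => hrow h.2
    rw [hstay, hstay]
    subst hcol
    refine ⟨?_, rfl, hc₂⟩
    have hxe : r.1 ≠ cycEnd a W d₁ := fun h => h₁ (Prod.ext h.symm rfl)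
    rcases hc₂ with ⟨hrY, -⟩ | rfl
    · show r.1 + (δ r.2 : ZMod n) ∈ cycInterval a W
      rw [hK.δ_eq _ hrY]
      exact add_mem_cycInterval hK.pm_fst hrX hxe
    · -- outside `Y` a column may point backwards, but the second cop now guards the entry row
      have hxnt : r.1 ≠ cycEnd a W (-d₁) := fun h => h₂ (Prod.ext h.symm rfl)
      show r.1 + (δ r.2 : ZMod n) ∈ cycInterval a W
      rcases hδ r.2 with h | h <;> rw [h]
      · exact add_mem_cycInterval hK.pm_fst hrX hxe
      · exact add_mem_cycInterval hK.pm_fst.neg hrX hxnt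

theorem ensureFrom_shadow (hK : IsConflux δ ε (cycInterval a W) (cycInterval b H) d₁ d₂)
    (hδ : ∀ y, δ y = d₁ ∨ δ y = -d₁) {ι : Type*} {c₀ : ι → Vtx n} {i₁ i₂ : ι}
    (hc₁ : c₀ i₁ = (cycEnd a W d₁, cycEnd b H (-d₂)))
    (hc₂ : c₀ i₂ = (cycEnd a W (-d₁), cycEnd b H d₂)) {r₀ : Vtx n}
    (hr : r₀ ∈ cycInterval a W ×ˢ cycInterval b H) (hentry : r₀.2 = cycEnd b H (-d₂)) :
    EnsureFrom (Adj δ ε) (Adj δ ε) c₀ r₀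
      (fun cops rob => Captured cops rob ∨ ∀ t, (rob t).1 ∈ cycInterval a W) := by
  refine EnsureFrom.of_rule (shadowStep ε) step_shadowStep fun rob h0 hrob => ?_
  by_cases hcap : Captured (fun t i => ruleTraj (shadowStep ε) (c₀ i) rob t) rob
  · exact Or.inl hcap
  have hfree (t : ℕ) (i : ι) : ruleTraj (shadowStep ε) (c₀ i) rob t ≠ rob t :=
    fun h => hcap ⟨t, i, Or.inl h⟩
  have hinv (t : ℕ) : ShadowInv a W b H d₁ d₂ (ruleTraj (shadowStep ε) (c₀ i₁) rob t)
      (ruleTraj (shadowStep ε) (c₀ i₂) rob t) (rob t) := by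
    induction t with
    | zero =>
      subst h0
      exact ⟨hr.1, by rw [ruleTraj, hc₁, hentry], Or.inl ⟨hr.2, hc₂⟩⟩
    | succ t ih => exact ih.step hK hδ (hrob t) (hfree t i₁) (hfree t i₂)
  exact Or.inr fun t => (hinv t).1

theorem ensureFrom_of_entry (hK : IsConflux δ ε (cycInterval a W) (cycInterval b H) d₁ d₂)
    (hδ : ∀ y, PM (δ y)) (hε : ∀ x, PM (ε x)) {ι : Type*} {c₀ : ι → Vtx n} {i₁ i₂ : ι}
    (hc₁ : c₀ i₁ = (cycEnd a W d₁, cycEnd b H (-d₂)))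
    (hc₂ : c₀ i₂ = (cycEnd a W (-d₁), cycEnd b H d₂)) {r₀ : Vtx n}
    (hr : r₀ ∈ cycInterval a W ×ˢ cycInterval b H)
    (hentry : r₀.1 = cycEnd a W (-d₁) ∨ r₀.2 = cycEnd b H (-d₂)) :
    EnsureFrom (Adj δ ε) (Adj δ ε) c₀ r₀ (fun cops rob => Captured cops rob ∨
      (∀ t, (rob t).1 ∈ cycInterval a W) ∨ ∀ t, (rob t).2 ∈ cycInterval b H) := by
  rcases hentry with hrow | hcol
  · refine EnsureFrom.of_equiv (Equiv.prodComm _ _) (fun _ _ => adj_swap_iff.1)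
      (fun _ _ => adj_swap_iff.2) ?_ (ensureFrom_shadow hK.swap
        (fun x => (hε x).eq_or_eq_neg hK.pm_snd) (i₁ := i₂) (i₂ := i₁)
        (by simp [hc₂]) (by simp [hc₁]) hr.symm hrow)
    rintro cops rob (hcap | hY)
    · exact Or.inl (hcap.of_map Prod.swap_injective)
    · exact Or.inr (Or.inr hY)
  · exact (ensureFrom_shadow hK (fun y => (hδ y).eq_or_eq_neg hK.pm_fst) hc₁ hc₂ hr hcol).mono
      fun _ _ => Or.imp_right Or.inl

end Shadow

theorem trap_one_general
    (n : ℕ) (δ ε : ZMod n → ℤ)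
    (hδ : ∀ y, PM (δ y)) (hε : ∀ x, PM (ε x))
    (S₁ S₂ : Strm n δ ε) (h₁ : S₁.vert = true) (h₂ : S₂.vert = false)
    (K : Set (Vtx n)) (hK : K = S₁.verts ∩ S₂.verts)
    (r₀ : Vtx n) (hr : r₀ ∈ K)
    (hin : ∃ u, Adj δ ε u r₀ ∧ u ∉ K) :
    EnsureFrom (Adj δ ε) (Adj δ ε)
      (fun i : {v : Vtx n // MainCorner δ ε K v} => i.val) r₀
      (fun cops rob => Captured cops rob ∨
        ∃ S : Strm n δ ε, K ⊆ S.verts ∧ ∃ T, ∀ t, T ≤ t → rob t ∈ S.verts) := by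
  have hconf := Strm.isConflux hδ hε h₁ h₂
  obtain rfl := hK.trans (Strm.verts_inter_verts h₁ h₂)
  by_cases hfull : S₁.w = n ∨ S₂.w = n
  · refine EnsureFrom.of_forall fun _ _ => Or.inr ?_
    rcases hfull with hw | hw
    · exact ⟨S₁, fun _ _ => Strm.mem_verts_of_w_eq hw, 0, fun _ _ => Strm.mem_verts_of_w_eq hw⟩
    · exact ⟨S₂, fun _ _ => Strm.mem_verts_of_w_eq hw, 0, fun _ _ => Strm.mem_verts_of_w_eq hw⟩
  have hH : S₁.w < n := lt_of_le_of_ne S₁.le_n fun h => hfull (Or.inl h)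
  have hW : S₂.w < n := lt_of_le_of_ne S₂.le_n fun h => hfull (Or.inr h)
  have : Fact (1 < n) := ⟨by have := S₁.one_le; omega⟩
  obtain ⟨u, hu, huK⟩ := hin
  refine (ensureFrom_of_entry hconf hδ hε
    (i₁ := ⟨_, mainCorner_exit_entry hconf hW hH S₂.one_le S₁.one_le⟩)
    (i₂ := ⟨_, mainCorner_entry_exit hconf hW hH S₂.one_le S₁.one_le⟩) rfl rfl hr
    (hconf.entry_of_adj_notMem hr hu huK)).mono ?_
  rintro cops rob (hcap | hX | hY)
  · exact Or.inl hcap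
  · exact Or.inr ⟨S₂, fun p hp => (Strm.mem_verts_of_not_vert h₂).2 hp.1, 0,
      fun t _ => (Strm.mem_verts_of_not_vert h₂).2 (hX t)⟩
  · exact Or.inr ⟨S₁, fun p hp => (Strm.mem_verts_of_vert h₁).2 hp.2, 0,
      fun t _ => (Strm.mem_verts_of_vert h₁).2 (hY t)⟩

/-- (Lemma `trap1`.)  In the forced-move game, if the cops
occupy all main corners of a conflux `K`, the robber is in `K` and the
in-neighbourhood of the robber's vertex is not contained in `K`, then the cops
can guarantee that the robber is captured or confined to a stream containing
`K`. -/
theorem trap_one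
    (n : ℕ) (hn : 1 ≤ n) (δ ε : ZMod n → ℤ)
    (hδ : ∀ y, PM (δ y)) (hε : ∀ x, PM (ε x))
    (S₁ S₂ : Strm n δ ε) (h₁ : S₁.vert = true) (h₂ : S₂.vert = false)
    (K : Set (Vtx n)) (hK : K = S₁.verts ∩ S₂.verts) (hKne : K.Nonempty)
    (r₀ : Vtx n) (hr : r₀ ∈ K)
    (hin : ∃ u, Adj δ ε u r₀ ∧ u ∉ K) :
    EnsureFrom (Adj δ ε) (Adj δ ε)
      (fun i : {v : Vtx n // MainCorner δ ε K v} => i.val) r₀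
      (fun cops rob => Captured cops rob ∨
        ∃ S : Strm n δ ε, K ⊆ S.verts ∧ ∃ T, ∀ t, T ≤ t → rob t ∈ S.verts) :=
  trap_one_general n δ ε hδ hε S₁ S₂ h₁ h₂ K hK r₀ hr hin

end CopsPaper
end

section
/- Let G be a k-regularly oriented toroidal grid C_n □ C_n with 2 ≤ k < n, let v be a vertex of G with out-neighbours u and w, and set d = w − v. If x is a main shadow of v, then y = x + d is an out-neighbour of x and y is a diagonal shadow of u. If x is a secondary shadow of v, then y = x − d is an out-neighbour of x and y is a diagonal shadow of u. -/
namespace CopsPaper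

/-! ### Auxiliary lemmas for Statement 8 -/

section Aux

variable {n k : ℕ} {f : ZMod n → ℤ} {c : ZMod n}

/-- Position function on `ZMod k`. -/
def af (k : ℕ) (s : ℤ) (P : ZMod k) : ZMod k := if s = 1 then P else -1 - P

lemma af_shift {k : ℕ} {s : ℤ} (hs : PM s) (t : ℤ) (P : ZMod k) :
    af k s (P + ((t * s : ℤ) : ZMod k)) = af k s P + (t : ZMod k) := by
  rcases hs with h | h <;> subst h <;> simp [af] <;> push_cast <;> ring

lemma af_neg {k : ℕ} {s : ℤ} (hs : PM s) (P : ZMod k) :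
    af k (-s) P = -1 - af k s P := by
  rcases hs with h | h <;> subst h <;> norm_num [af] <;> ring

lemma BlockAltAt.apply [NeZero n] (hf : BlockAltAt k f c) (x : ZMod n) :
    f x = if (x - c).val / k % 2 = 0 then 1 else -1 := by
  have hx : x = c + (((x - c).val : ℕ) : ZMod n) := by
    rw [ZMod.natCast_rightInverse (x - c)]; ring
  conv_lhs => rw [hx]
  exact hf _

lemma BlockAltAt.pm [NeZero n] (hf : BlockAltAt k f c) (x : ZMod n) : PM (f x) := by
  rw [hf.apply x]
  unfold PM; split
  · left; rfl
  · right; rfl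

lemma val_shift [NeZero n] (z : ZMod n) (t : ℤ) :
    (((z + ((t : ℤ) : ZMod n) - c).val : ℤ) : ℤ) = (((z - c).val : ℤ) + t) % (n : ℤ) := by
  have h1 : z + ((t : ℤ) : ZMod n) - c = ((((z - c).val : ℤ) + t : ℤ) : ZMod n) := by
    push_cast
    rw [ZMod.natCast_rightInverse (z - c)]
    ring
  rw [h1, ZMod.val_intCast]

end Aux
section Aux2

variable {n k : ℕ} {f : ZMod n → ℤ} {c : ZMod n}

lemma nat_cast_int (i : ℕ) : ((i : ℕ) : ZMod n) = (((i : ℤ)) : ZMod n) := by push_cast; ring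

lemma decomp (hk : 0 < k) (v0 : ℕ) :
    ∃ q p0, p0 < k ∧ v0 = k * q + p0 ∧ v0 % k = p0 ∧ v0 / k = q := by
  refine ⟨v0 / k, v0 % k, Nat.mod_lt _ hk, (Nat.div_add_mod _ k).symm, rfl, rfl⟩

lemma div_small (hk : 0 < k) {q p0 m : ℕ} (hm : p0 + m < k) :
    (k * q + p0 + m) / k = q := by
  rw [Nat.add_assoc, Nat.mul_add_div hk, Nat.div_eq_of_lt (by omega), Nat.add_zero]

lemma mod_small (hk : 0 < k) {q p0 m : ℕ} (hm : p0 + m < k) :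
    (k * q + p0 + m) % k = p0 + m := by
  rw [Nat.add_assoc, Nat.mul_add_mod, Nat.mod_eq_of_lt (by omega)]

/-- If `f` is constant on `y, y+1, …, y+m`, then `m` stays within the block of `y`. -/
lemma const_le [NeZero n] (hf : BlockAltAt k f c) (hk : 0 < k) (hkd : k ∣ n) (hkn : k < n)
    (h2 : n / k % 2 = 0) (y : ZMod n) (m : ℕ)
    (hconst : ∀ i : ℕ, i ≤ m → f (y + (i : ZMod n)) = f y) :
    m ≤ k - 1 - (y - c).val % k := by
  obtain ⟨K, hnK⟩ := hkd
  have hK2 : 2 ≤ K := by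
    rcases Nat.lt_or_ge K 2 with h | h
    · interval_cases K <;> omega
    · exact h
  have hKval : n / k = K := by rw [hnK, Nat.mul_div_cancel_left _ hk]
  rw [hKval] at h2
  have hv0 : (y - c).val < n := ZMod.val_lt _
  obtain ⟨q, p0, hp0k, hsplit, hmod, hdiv⟩ := decomp hk (y - c).val
  have hqK : q < K := by
    by_contra hcon
    push_neg at hcon
    have : k * K ≤ k * q := Nat.mul_le_mul_left k hcon
    omega
  have hq1K : k * (q + 1) ≤ k * K := Nat.mul_le_mul_left k (by omega)
  have hq1 : k * (q + 1) = k * q + k := by ring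
  rw [hmod]
  by_contra hlt
  push_neg at hlt
  have hi : k - p0 ≤ m := by omega
  have hval := val_shift (c := c) y ((k - p0 : ℕ) : ℤ)
  rw [← nat_cast_int] at hval
  have hvi : (((y - c).val : ℤ) + ((k - p0 : ℕ) : ℤ)) = ((k * (q + 1) : ℕ) : ℤ) := by
    have hnat : (y - c).val + (k - p0) = k * (q + 1) := by omega
    exact_mod_cast hnat
  rw [hvi] at hval
  have hcon := hconst (k - p0) hi
  rw [hf.apply (y + ((k - p0 : ℕ) : ZMod n)), hf.apply y, hdiv] at hcon
  rcases Nat.lt_or_ge (k * (q + 1)) n with hc | hc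
  · have hval' : (y + ((k - p0 : ℕ) : ZMod n) - c).val = k * (q + 1) := by
      have h0 : ((k * (q + 1) : ℕ) : ℤ) % n = ((k * (q + 1) : ℕ) : ℤ) :=
        Int.emod_eq_of_lt (by positivity) (by exact_mod_cast hc)
      rw [h0] at hval
      exact_mod_cast hval
    rw [hval', Nat.mul_div_cancel_left _ hk] at hcon
    split_ifs at hcon <;> omega
  · have hqK1 : q + 1 = K := by
      have : k * (q + 1) = k * K := by omega
      exact Nat.eq_of_mul_eq_mul_left hk this
    have hkn' : (k * (q + 1) : ℕ) = n := by rw [hqK1, hnK]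
    have hval' : (y + ((k - p0 : ℕ) : ZMod n) - c).val = 0 := by
      rw [hkn'] at hval
      rw [Int.emod_self] at hval
      exact_mod_cast hval
    rw [hval', Nat.zero_div] at hcon
    split_ifs at hcon <;> omega

/-- Moving `m ≤ k - 1 - p₀` steps stays in the same block: value version. -/
lemma val_add_small [NeZero n] (hk : 0 < k) (hkd : k ∣ n)
    (y : ZMod n) (m : ℕ) (hm : m ≤ k - 1 - (y - c).val % k) :
    (y + (m : ZMod n) - c).val = (y - c).val + m := by
  obtain ⟨K, hnK⟩ := hkd
  have hv0 : (y - c).val < n := ZMod.val_lt _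
  obtain ⟨q, p0, hp0k, hsplit, hmod, hdiv⟩ := decomp hk (y - c).val
  have hqK : q < K := by
    by_contra hcon
    push_neg at hcon
    have : k * K ≤ k * q := Nat.mul_le_mul_left k hcon
    omega
  have hq1K : k * (q + 1) ≤ k * K := Nat.mul_le_mul_left k (by omega)
  have hq1 : k * (q + 1) = k * q + k := by ring
  have hval := val_shift (c := c) y ((m : ℕ) : ℤ)
  rw [← nat_cast_int] at hval
  have hvi : (((y - c).val : ℤ) + ((m : ℕ) : ℤ)) = (((y - c).val + m : ℕ) : ℤ) := by
    push_cast; ring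
  rw [hvi, Int.emod_eq_of_lt (by positivity) (by exact_mod_cast by omega : (((y - c).val + m : ℕ) : ℤ) < (n : ℤ))] at hval
  exact_mod_cast hval

/-- Same-block division fact. -/
lemma div_add_small (hk : 0 < k) {v0 m : ℕ} (hm : m ≤ k - 1 - v0 % k) :
    (v0 + m) / k = v0 / k ∧ (v0 + m) % k = v0 % k + m := by
  obtain ⟨q, p0, hp0k, hsplit, hmod, hdiv⟩ := decomp hk v0
  subst hsplit
  rw [hmod] at hm ⊢
  rw [hdiv]
  exact ⟨div_small hk (by omega), mod_small hk (by omega)⟩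

/-- Characterisation of `SameBlock` for block-alternating functions. -/
lemma sameBlock_iff [NeZero n] (hf : BlockAltAt k f c) (hk : 0 < k) (hkd : k ∣ n)
    (hkn : k < n) (h2 : n / k % 2 = 0) (y y' : ZMod n) :
    SameBlock f y y' ↔ (y - c).val / k = (y' - c).val / k := by
  constructor
  · rintro (⟨m, hy', hconst⟩ | ⟨m, hy, hconst⟩)
    · subst hy'
      have hm := const_le hf hk hkd hkn h2 y m hconst
      rw [val_add_small hk hkd y m hm]
      exact ((div_add_small hk hm).1).symm
    · subst hy
      have hm := const_le hf hk hkd hkn h2 y' m hconst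
      rw [val_add_small hk hkd y' m hm]
      exact (div_add_small hk hm).1
  · intro hq
    have key : ∀ (z z' : ZMod n), (z - c).val % k ≤ (z' - c).val % k →
        (z - c).val / k = (z' - c).val / k →
        (∃ m : ℕ, z' = z + (m : ZMod n) ∧ ∀ i : ℕ, i ≤ m → f (z + (i : ZMod n)) = f z) := by
      intro z z' hle hqq
      obtain ⟨q0, p0, hp0k, hsplit, hmod, hdiv⟩ := decomp hk (z - c).val
      obtain ⟨q0', p0', hp0k', hsplit', hmod', hdiv'⟩ := decomp hk (z' - c).val
      have hqeq : q0 = q0' := by omega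
      subst hqeq
      rw [hmod, hmod'] at hle
      have hvv : (z' - c).val = (z - c).val + (p0' - p0) := by omega
      refine ⟨p0' - p0, ?_, ?_⟩
      · have hsm : p0' - p0 ≤ k - 1 - (z - c).val % k := by omega
        have heq := val_add_small (c := c) hk hkd z _ hsm
        rw [← hvv] at heq
        have hzz : z + ((p0' - p0 : ℕ) : ZMod n) - c = z' - c := by
          rw [← ZMod.natCast_rightInverse (z + ((p0' - p0 : ℕ) : ZMod n) - c), heq,
            ZMod.natCast_rightInverse]
        exact (sub_left_inj.mp hzz).symm
      · intro i hi
        have hsi : i ≤ k - 1 - (z - c).val % k := by omega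
        have hvi := val_add_small (c := c) hk hkd z i hsi
        rw [hf.apply (z + (i : ZMod n)), hf.apply z, hvi,
          (div_add_small hk hsi).1]
    rcases le_or_gt ((y - c).val % k) ((y' - c).val % k) with hle | hlt
    · exact Or.inl (key y y' hle hq)
    · exact Or.inr (key y' y (by omega) hq.symm)

end Aux2
section Aux3

variable {n k : ℕ} {f : ZMod n → ℤ} {c : ZMod n}

lemma div_small' (hk : 0 < k) {q p0 : ℕ} (h : p0 < k) : (k * q + p0) / k = q := by
  rw [Nat.mul_add_div hk, Nat.div_eq_of_lt h, Nat.add_zero]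

lemma val_add_exact [NeZero n] (z : ZMod n) (m : ℕ) (hlt : (z - c).val + m < n) :
    (z + (m : ZMod n) - c).val = (z - c).val + m := by
  have hval := val_shift (c := c) z ((m : ℕ) : ℤ)
  rw [← nat_cast_int] at hval
  have h1 : ((z - c).val : ℤ) + ((m : ℕ) : ℤ) = (((z - c).val + m : ℕ) : ℤ) := by
    push_cast; ring
  rw [h1, Int.emod_eq_of_lt (by positivity) (by exact_mod_cast hlt)] at hval
  exact_mod_cast hval

lemma val_add_wrap [NeZero n] (z : ZMod n) (m : ℕ) (heq : (z - c).val + m = n) :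
    (z + (m : ZMod n) - c).val = 0 := by
  have hval := val_shift (c := c) z ((m : ℕ) : ℤ)
  rw [← nat_cast_int] at hval
  have h1 : ((z - c).val : ℤ) + ((m : ℕ) : ℤ) = (n : ℤ) := by push_cast; omega
  rw [h1, Int.emod_self] at hval
  exact_mod_cast hval

lemma val_sub_exact [NeZero n] (z : ZMod n) (b : ℕ) (hb : b ≤ (z - c).val) :
    (z + ((-(b : ℤ) : ℤ) : ZMod n) - c).val = (z - c).val - b := by
  have hval := val_shift (c := c) z (-(b : ℤ))
  have hv0 : (z - c).val < n := ZMod.val_lt _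
  have h1 : ((z - c).val : ℤ) + (-(b : ℤ)) = (((z - c).val - b : ℕ) : ℤ) := by
    push_cast; omega
  rw [h1, Int.emod_eq_of_lt (by positivity)
    (by exact_mod_cast (by omega : (z - c).val - b < n))] at hval
  exact_mod_cast hval

lemma neg_one_emod [NeZero n] : (-1 : ℤ) % (n : ℤ) = ((n - 1 : ℕ) : ℤ) := by
  have hn : 0 < n := Nat.pos_of_ne_zero (NeZero.ne n)
  have h2 : (-1 : ℤ) = ((n - 1 : ℕ) : ℤ) - n := by push_cast; omega
  rw [h2, show (((n - 1 : ℕ) : ℤ) - n) % n = ((n - 1 : ℕ) : ℤ) % n by simp [Int.sub_emod]]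
  exact Int.emod_eq_of_lt (by positivity) (by exact_mod_cast (by omega : n - 1 < n))

lemma val_sub_wrap [NeZero n] (z : ZMod n) (b : ℕ) (hb : b = (z - c).val + 1) :
    (z + ((-(b : ℤ) : ℤ) : ZMod n) - c).val = n - 1 := by
  have hval := val_shift (c := c) z (-(b : ℤ))
  have h1 : ((z - c).val : ℤ) + (-(b : ℤ)) = -1 := by rw [hb]; push_cast; ring
  rw [h1, neg_one_emod] at hval
  exact_mod_cast hval

/-- Escape distance along a direction `s`. -/
lemma esc_eq [NeZero n] (hf : BlockAltAt k f c) (hk : 0 < k) (hkd : k ∣ n) (hkn : k < n)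
    (h2 : n / k % 2 = 0) (z : ZMod n) (s : ℤ) (hs : PM s) :
    sInf {m : ℕ | ¬ SameBlock f (z + (((m : ℤ) * s : ℤ) : ZMod n)) z}
      = if s = 1 then k - (z - c).val % k else (z - c).val % k + 1 := by
  obtain ⟨K, hnK⟩ := id hkd
  have hK2 : 2 ≤ K := by
    rcases Nat.lt_or_ge K 2 with h | h
    · interval_cases K <;> omega
    · exact h
  have hKval : n / k = K := by rw [hnK, Nat.mul_div_cancel_left _ hk]
  rw [hKval] at h2
  have hv0 : (z - c).val < n := ZMod.val_lt _
  obtain ⟨q, p0, hp0k, hsplit, hmod, hdiv⟩ := decomp hk (z - c).val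
  have hqK : q < K := by
    by_contra hcon
    push_neg at hcon
    have : k * K ≤ k * q := Nat.mul_le_mul_left k hcon
    omega
  have hq1K : k * (q + 1) ≤ k * K := Nat.mul_le_mul_left k (by omega)
  have hq1 : k * (q + 1) = k * q + k := by ring
  have hSB := sameBlock_iff (c := c) hf hk hkd hkn (by rw [hKval]; exact h2)
  rcases hs with hs1 | hs1 <;> subst hs1
  · -- s = 1
    rw [if_pos rfl, hmod]
    have hcast : ∀ m : ℕ, (((m : ℤ) * 1 : ℤ) : ZMod n) = ((m : ℕ) : ZMod n) := by
      intro m; push_cast; ring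
    apply le_antisymm
    · apply Nat.sInf_le
      show ¬ SameBlock f (z + ((((k - p0 : ℕ) : ℤ) * 1 : ℤ) : ZMod n)) z
      rw [hcast, hSB]
      rcases Nat.lt_or_ge (k * (q + 1)) n with hc | hc
      · rw [val_add_exact z (k - p0) (by omega)]
        rw [show (z - c).val + (k - p0) = k * (q + 1) + 0 by omega,
          div_small' hk hk, hdiv]
        omega
      · rw [val_add_wrap z (k - p0) (by omega), Nat.zero_div, hdiv]
        have : k * (q + 1) = k * K := by omega
        have : q + 1 = K := Nat.eq_of_mul_eq_mul_left hk this
        omega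
    · apply le_csInf
      · refine ⟨k - p0, ?_⟩
        show ¬ SameBlock f (z + ((((k - p0 : ℕ) : ℤ) * 1 : ℤ) : ZMod n)) z
        rw [hcast, hSB]
        rcases Nat.lt_or_ge (k * (q + 1)) n with hc | hc
        · rw [val_add_exact z (k - p0) (by omega)]
          rw [show (z - c).val + (k - p0) = k * (q + 1) + 0 by omega,
            div_small' hk hk, hdiv]
          omega
        · rw [val_add_wrap z (k - p0) (by omega), Nat.zero_div, hdiv]
          have h3 : k * (q + 1) = k * K := by omega
          have : q + 1 = K := Nat.eq_of_mul_eq_mul_left hk h3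
          omega
      · intro b hb
        by_contra hlt
        push_neg at hlt
        apply hb
        rw [hcast, hSB]
        rw [val_add_exact z b (by omega)]
        rw [show (z - c).val + b = k * q + (p0 + b) by omega,
          div_small' hk (by omega), hdiv]
  · -- s = -1
    rw [if_neg (by norm_num), hmod]
    have hcast : ∀ m : ℕ, (((m : ℤ) * (-1) : ℤ) : ZMod n) = ((-(m : ℤ) : ℤ) : ZMod n) := by
      intro m; push_cast; ring
    have hmem : ¬ SameBlock f (z + ((((p0 + 1 : ℕ) : ℤ) * (-1) : ℤ) : ZMod n)) z := by
      rw [hcast, hSB]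
      rcases Nat.lt_or_ge p0 (z - c).val with hc | hc
      · -- q ≥ 1
        have hq1' : 1 ≤ q := by
          rcases Nat.eq_zero_or_pos q with h0 | h0
          · subst h0; omega
          · exact h0
        rw [val_sub_exact z (p0 + 1) (by omega)]
        rw [show (z - c).val - (p0 + 1) = k * (q - 1) + (k - 1) by
          have : k * (q - 1) + k = k * q := by
            have : k * (q - 1 + 1) = k * (q - 1) + k := by ring
            rw [← this, Nat.sub_add_cancel hq1']
          omega, div_small' hk (by omega), hdiv]
        omega
      · -- q = 0, wraps
        have hq0 : (z - c).val = p0 := by omega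
        rw [val_sub_wrap z (p0 + 1) (by omega)]
        rw [show n - 1 = k * (K - 1) + (k - 1) by
          have : k * (K - 1) + k = k * K := by
            have : k * (K - 1 + 1) = k * (K - 1) + k := by ring
            rw [← this, Nat.sub_add_cancel (by omega)]
          omega, div_small' hk (by omega), hdiv]
        have hqz : q < 1 := Nat.lt_of_mul_lt_mul_left (show k * q < k * 1 by omega)
        omega
    apply le_antisymm
    · exact Nat.sInf_le hmem
    · apply le_csInf ⟨p0 + 1, hmem⟩
      intro b hb
      by_contra hlt
      push_neg at hlt
      apply hb
      rw [hcast, hSB]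
      rw [val_sub_exact z b (by omega)]
      rw [show (z - c).val - b = k * q + (p0 - b) by omega,
        div_small' hk (by omega), hdiv]

end Aux3
section Aux4

variable {n k : ℕ} {f : ZMod n → ℤ} {c : ZMod n}

lemma sameBlock_refl (f : ZMod n → ℤ) (y : ZMod n) : SameBlock f y y :=
  Or.inl ⟨0, by simp, fun i hi => by
    have : i = 0 := by omega
    subst this; simp⟩

lemma zval_lt (hk2 : 2 ≤ k) (P : ZMod k) : P.val < k := by
  haveI : NeZero k := ⟨by omega⟩; exact ZMod.val_lt P

lemma zval_inj (hk2 : 2 ≤ k) {P Q : ZMod k} (h : P.val = Q.val) : P = Q := by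
  haveI : NeZero k := ⟨by omega⟩; exact ZMod.val_injective k h

lemma af_one_val (hk2 : 2 ≤ k) (v0 : ℕ) : (af k 1 ((v0 : ℕ) : ZMod k)).val = v0 % k := by
  haveI : NeZero k := ⟨by omega⟩
  simp [af, ZMod.val_natCast]

lemma neg_one_sub_cast (hk2 : 2 ≤ k) (v0 : ℕ) :
    (-1 - ((v0 : ℕ) : ZMod k) : ZMod k) = ((k - 1 - v0 % k : ℕ) : ZMod k) := by
  haveI : NeZero k := ⟨by omega⟩
  have hsum : ((k - 1 - v0 % k : ℕ) : ZMod k) + ((v0 : ℕ) : ZMod k) = -1 := by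
    rw [← ZMod.natCast_mod v0 k, ← Nat.cast_add,
      show k - 1 - v0 % k + v0 % k = k - 1 from by
        have : v0 % k < k := Nat.mod_lt _ (by omega); omega,
      Nat.cast_sub (by omega), ZMod.natCast_self]
    simp
  exact (eq_sub_iff_add_eq.mpr hsum).symm

lemma af_neg_one_val (hk2 : 2 ≤ k) (v0 : ℕ) :
    (af k (-1) ((v0 : ℕ) : ZMod k)).val = k - 1 - v0 % k := by
  haveI : NeZero k := ⟨by omega⟩
  have h1 : af k (-1) ((v0 : ℕ) : ZMod k) = -1 - ((v0 : ℕ) : ZMod k) := by norm_num [af]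
  rw [h1, neg_one_sub_cast hk2, ZMod.val_natCast, Nat.mod_eq_of_lt (by omega)]

lemma cast_eq_neg_one_iff (hk2 : 2 ≤ k) (v0 : ℕ) :
    ((v0 : ℕ) : ZMod k) = -1 ↔ v0 % k = k - 1 := by
  haveI : NeZero k := ⟨by omega⟩
  constructor
  · intro h
    have h2 := congrArg ZMod.val h
    rw [ZMod.val_natCast] at h2
    rcases k with _ | k'
    · omega
    · rw [ZMod.val_neg_one] at h2; omega
  · intro h
    rw [← ZMod.natCast_mod v0 k, h, Nat.cast_sub (by omega), ZMod.natCast_self]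
    simp

lemma cast_eq_zero_iff' (hk2 : 2 ≤ k) (v0 : ℕ) :
    ((v0 : ℕ) : ZMod k) = 0 ↔ v0 % k = 0 := by
  rw [ZMod.natCast_eq_zero_iff, Nat.dvd_iff_mod_eq_zero]

/-- Step lemma: the direction flips exactly on block boundaries. -/
lemma fstep [NeZero n] (hf : BlockAltAt k f c) (hk2 : 2 ≤ k) (hkd : k ∣ n) (hkn : k < n)
    (h2 : n / k % 2 = 0) (z : ZMod n) (s : ℤ) (hs : PM s) :
    f (z + ((s : ℤ) : ZMod n)) =
      if af k s (((z - c).val : ℕ) : ZMod k) = -1 then -f z else f z := by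
  have hk : 0 < k := by omega
  obtain ⟨K, hnK⟩ := id hkd
  have hK2 : 2 ≤ K := by
    rcases Nat.lt_or_ge K 2 with h | h
    · interval_cases K <;> omega
    · exact h
  have hKval : n / k = K := by rw [hnK, Nat.mul_div_cancel_left _ hk]
  rw [hKval] at h2
  have hv0 : (z - c).val < n := ZMod.val_lt _
  obtain ⟨q, p0, hp0k, hsplit, hmod, hdiv⟩ := decomp hk (z - c).val
  have hqK : q < K := by
    by_contra hcon
    push_neg at hcon
    have : k * K ≤ k * q := Nat.mul_le_mul_left k hcon
    omega
  have hq1K : k * (q + 1) ≤ k * K := Nat.mul_le_mul_left k (by omega)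
  have hq1 : k * (q + 1) = k * q + k := by ring
  rcases hs with h | h <;> subst h
  · -- s = 1
    have hcond : (af k 1 (((z - c).val : ℕ) : ZMod k) = -1) ↔ p0 = k - 1 := by
      rw [show af k 1 (((z - c).val : ℕ) : ZMod k) = (((z - c).val : ℕ) : ZMod k) from by
        simp [af], cast_eq_neg_one_iff hk2]
      omega
    have hzcast : ((1 : ℤ) : ZMod n) = ((1 : ℕ) : ZMod n) := by push_cast; ring
    rcases Nat.lt_or_ge ((z - c).val + 1) n with hc | hc
    · have hval : (z + ((1 : ℤ) : ZMod n) - c).val = (z - c).val + 1 := by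
        rw [hzcast]; exact val_add_exact z 1 hc
      by_cases hp : p0 = k - 1
      · rw [if_pos (hcond.mpr hp), hf.apply, hf.apply, hval,
          show (z - c).val + 1 = k * (q + 1) + 0 by omega, div_small' hk hk, hdiv]
        split_ifs <;> omega
      · rw [if_neg (fun hcc => hp (hcond.mp hcc)), hf.apply, hf.apply, hval,
          show (z - c).val + 1 = k * q + (p0 + 1) by omega, div_small' hk (by omega), hdiv]
    · have hceq : (z - c).val + 1 = n := by omega
      have hval : (z + ((1 : ℤ) : ZMod n) - c).val = 0 := by
        rw [hzcast]; exact val_add_wrap z 1 hceq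
      have h3 : k * (K - 1) + k = k * K := by
        have h4 : k * (K - 1 + 1) = k * (K - 1) + k := by ring
        rw [← h4, Nat.sub_add_cancel (by omega)]
      have h5 : (z - c).val = k * (K - 1) + (k - 1) := by omega
      have h6 := div_small' hk (q := K - 1) (p0 := k - 1) (by omega)
      rw [h5] at hdiv
      rw [h6] at hdiv
      have hpv : p0 = k - 1 := by omega
      rw [if_pos (hcond.mpr hpv), hf.apply, hf.apply, hval, Nat.zero_div, h5,
        div_small' hk (by omega)]
      have h7 : (K - 1) % 2 = 1 := by omega
      rw [h7]
      norm_num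
  · -- s = -1
    have hcond : (af k (-1) (((z - c).val : ℕ) : ZMod k) = -1) ↔ p0 = 0 := by
      rw [show af k (-1) (((z - c).val : ℕ) : ZMod k) = -1 - (((z - c).val : ℕ) : ZMod k) from by
        norm_num [af], sub_eq_self, cast_eq_zero_iff' hk2]
      omega
    have hzcast : ((-1 : ℤ) : ZMod n) = ((-((1 : ℕ) : ℤ) : ℤ) : ZMod n) := by norm_num
    rcases Nat.eq_zero_or_pos (z - c).val with hc | hc
    · -- wraps
      have hp0 : p0 = 0 := by omega
      have hq0 : q = 0 := by
        have := Nat.lt_of_mul_lt_mul_left (show k * q < k * 1 by omega); omega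
      have hval : (z + ((-1 : ℤ) : ZMod n) - c).val = n - 1 := by
        rw [hzcast]; exact val_sub_wrap z 1 (by omega)
      have h3 : k * (K - 1) + k = k * K := by
        have h4 : k * (K - 1 + 1) = k * (K - 1) + k := by ring
        rw [← h4, Nat.sub_add_cancel (by omega)]
      rw [if_pos (hcond.mpr hp0), hf.apply, hf.apply, hval, hdiv, hq0,
        show n - 1 = k * (K - 1) + (k - 1) by omega, div_small' hk (by omega)]
      have h7 : (K - 1) % 2 = 1 := by omega
      rw [h7]
      norm_num
    · have hval : (z + ((-1 : ℤ) : ZMod n) - c).val = (z - c).val - 1 := by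
        rw [hzcast]; exact val_sub_exact z 1 (by omega)
      by_cases hp : p0 = 0
      · have hq1' : 1 ≤ q := by
          rcases Nat.eq_zero_or_pos q with h0 | h0
          · subst h0; omega
          · exact h0
        have h3 : k * (q - 1) + k = k * q := by
          have h4 : k * (q - 1 + 1) = k * (q - 1) + k := by ring
          rw [← h4, Nat.sub_add_cancel hq1']
        rw [if_pos (hcond.mpr hp), hf.apply, hf.apply, hval,
          show (z - c).val - 1 = k * (q - 1) + (k - 1) by omega,
          div_small' hk (by omega), hdiv]
        split_ifs <;> omega
      · rw [if_neg (fun hcc => hp (hcond.mp hcc)), hf.apply, hf.apply, hval,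
          show (z - c).val - 1 = k * q + (p0 - 1) by omega,
          div_small' hk (by omega), hdiv]

/-- Horizontal escape distance via `af`. -/
lemma HE_eq [NeZero n] {δ ε : ZMod n → ℤ} {cδ cε : ZMod n}
    (hδ : BlockAltAt k δ cδ) (hε : BlockAltAt k ε cε)
    (hk2 : 2 ≤ k) (hkd : k ∣ n) (hkn : k < n) (h2 : n / k % 2 = 0) (p : Vtx n) :
    HE δ ε p = k - (af k (δ p.2) (((p.1 - cε).val : ℕ) : ZMod k)).val := by
  have hk : 0 < k := by omega
  have hset : {m : ℕ | (p.1 + (((m : ℤ) * δ p.2 : ℤ) : ZMod n), p.2) ∉ maxConflux δ ε p}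
      = {m : ℕ | ¬ SameBlock ε (p.1 + (((m : ℤ) * δ p.2 : ℤ) : ZMod n)) p.1} := by
    ext m
    simp only [Set.mem_setOf_eq, maxConflux]
    constructor
    · intro h hsb; exact h ⟨hsb, sameBlock_refl δ p.2⟩
    · intro h hmem; exact h hmem.1
  rw [HE, hset, esc_eq hε hk hkd hkn h2 p.1 (δ p.2) (hδ.pm p.2)]
  rcases hδ.pm p.2 with h | h <;> rw [h]
  · rw [if_pos rfl, af_one_val hk2]
  · rw [if_neg (by norm_num), af_neg_one_val hk2]
    have : (p.1 - cε).val % k < k := Nat.mod_lt _ hk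
    omega

/-- Vertical escape distance via `af`. -/
lemma VE_eq [NeZero n] {δ ε : ZMod n → ℤ} {cδ cε : ZMod n}
    (hδ : BlockAltAt k δ cδ) (hε : BlockAltAt k ε cε)
    (hk2 : 2 ≤ k) (hkd : k ∣ n) (hkn : k < n) (h2 : n / k % 2 = 0) (p : Vtx n) :
    VE δ ε p = k - (af k (ε p.1) (((p.2 - cδ).val : ℕ) : ZMod k)).val := by
  have hk : 0 < k := by omega
  have hset : {m : ℕ | (p.1, p.2 + (((m : ℤ) * ε p.1 : ℤ) : ZMod n)) ∉ maxConflux δ ε p}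
      = {m : ℕ | ¬ SameBlock δ (p.2 + (((m : ℤ) * ε p.1 : ℤ) : ZMod n)) p.2} := by
    ext m
    simp only [Set.mem_setOf_eq, maxConflux]
    constructor
    · intro h hsb; exact h ⟨sameBlock_refl ε p.1, hsb⟩
    · intro h hmem; exact h hmem.2
  rw [VE, hset, esc_eq hδ hk hkd hkn h2 p.2 (ε p.1) (hε.pm p.1)]
  rcases hε.pm p.1 with h | h <;> rw [h]
  · rw [if_pos rfl, af_one_val hk2]
  · rw [if_neg (by norm_num), af_neg_one_val hk2]
    have : (p.2 - cδ).val % k < k := Nat.mod_lt _ hk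
    omega

end Aux4
section Aux5

variable {n k : ℕ} {c : ZMod n}

lemma PM.neg_s8 {s : ℤ} (hs : PM s) : PM (-s) := by
  rcases hs with h | h <;> subst h
  · right; rfl
  · left; rfl

lemma esc_inj (hk2 : 2 ≤ k) {a b : ZMod k} (h : k - a.val = k - b.val) : a = b := by
  have ha := zval_lt hk2 a
  have hb := zval_lt hk2 b
  exact zval_inj hk2 (by omega)

lemma valk_cast [NeZero n] (hkd : k ∣ n) (w : ZMod n) :
    ((w.val : ℕ) : ZMod k) = ZMod.castHom hkd (ZMod k) w := by
  rw [ZMod.castHom_apply, ← ZMod.natCast_val]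

lemma valk_shift [NeZero n] (hkd : k ∣ n) (z : ZMod n) (t : ℤ) :
    (((z + ((t : ℤ) : ZMod n) - c).val : ℕ) : ZMod k)
      = (((z - c).val : ℕ) : ZMod k) + ((t : ℤ) : ZMod k) := by
  rw [valk_cast hkd, valk_cast hkd, map_sub, map_sub, map_add, map_intCast]
  ring

end Aux5
/-- (Lemma `closeshadow`.)  Let `v` have out-neighbours
`u, w` and let `d = w - v`.  If `x` is a main shadow of `v`, then `y = x + d`
is an out-neighbour of `x` and a diagonal shadow of `u`; if `x` is a secondary
shadow of `v`, then `y = x - d` is an out-neighbour of `x` and a diagonal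
shadow of `u`. -/
theorem close_shadow
    (n k : ℕ) (hk : 2 ≤ k) (hkn : k < n) (hdvd : 2 * k ∣ n)
    (δ ε : ZMod n → ℤ)
    (hδ : ∃ c, BlockAltAt k δ c) (hε : ∃ c, BlockAltAt k ε c)
    (v u w : Vtx n)
    (huw : (u = vOut δ v ∧ w = hOut ε v) ∨ (u = hOut ε v ∧ w = vOut δ v)) :
    (∀ x : Vtx n, IsMainShadow δ ε v x →
        Adj δ ε x (x + (w - v)) ∧ IsDiagShadow δ ε u (x + (w - v))) ∧
    (∀ x : Vtx n, IsSecShadow δ ε v x →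
        Adj δ ε x (x - (w - v)) ∧ IsDiagShadow δ ε u (x - (w - v))) := by
  obtain ⟨cδ, hδc⟩ := hδ
  obtain ⟨cε, hεc⟩ := hε
  haveI : NeZero n := ⟨by omega⟩
  have hk0 : 0 < k := by omega
  have hkd : k ∣ n := dvd_trans ⟨2, by ring⟩ hdvd
  have h2 : n / k % 2 = 0 := by
    obtain ⟨m, hm⟩ := hdvd
    rw [hm, show 2 * k * m = k * (2 * m) by ring, Nat.mul_div_cancel_left _ hk0]
    omega
  have hpmδ := hδc.pm
  have hpmε := hεc.pm
  have HEf := fun p => HE_eq hδc hεc hk hkd hkn h2 p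
  have VEf := fun p => VE_eq hδc hεc hk hkd hkn h2 p
  have QE := fun (z : ZMod n) (t : ℤ) => valk_shift (c := cε) (k := k) hkd z t
  have QD := fun (z : ZMod n) (t : ℤ) => valk_shift (c := cδ) (k := k) hkd z t
  have stepδ := fun z s hs => fstep hδc hk hkd hkn h2 z s hs
  have stepε := fun z s hs => fstep hεc hk hkd hkn h2 z s hs
  constructor
  · -- main shadows of v
    rintro x ⟨⟨r, hx1, hx2⟩, hxty, hxVH⟩
    simp only [ty, Prod.mk.injEq] at hxty
    obtain ⟨hty1, hty2⟩ := hxty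
    have hafx1 : af k (δ v.2) (((x.1 - cε).val : ℕ) : ZMod k)
        = af k (δ v.2) (((v.1 - cε).val : ℕ) : ZMod k) + ((r : ℤ) : ZMod k) := by
      rw [hx1, QE v.1 (r * δ v.2)]; exact af_shift (hpmδ v.2) r _
    have hx2' : x.2 = v.2 + (((-r) * ε v.1 : ℤ) : ZMod n) := by
      rw [hx2]; push_cast; ring
    have hafx2 : af k (ε v.1) (((x.2 - cδ).val : ℕ) : ZMod k)
        = af k (ε v.1) (((v.2 - cδ).val : ℕ) : ZMod k) + ((-r : ℤ) : ZMod k) := by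
      rw [hx2', QD v.2 ((-r) * ε v.1)]; exact af_shift (hpmε v.1) (-r) _
    have hC : af k (ε v.1) (((v.2 - cδ).val : ℕ) : ZMod k)
        = af k (δ v.2) (((v.1 - cε).val : ℕ) : ZMod k) + ((r : ℤ) : ZMod k) := by
      rw [VEf v, HEf x, hty1, hafx1] at hxVH
      exact esc_inj hk hxVH
    rcases huw with ⟨hu, hw⟩ | ⟨hu, hw⟩
    · -- Case A : u = vOut, w = hOut, y = (x.1, x.2 + ε v.1)
      subst hu hw
      have hy : x + (hOut ε v - v) = (x.1, x.2 + ((ε v.1 : ℤ) : ZMod n)) := by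
        rw [Prod.ext_iff]
        constructor
        · show x.1 + ((hOut ε v).1 - v.1) = x.1
          dsimp only [hOut]; ring
        · show x.2 + ((hOut ε v).2 - v.2) = x.2 + ((ε v.1 : ℤ) : ZMod n)
          dsimp only [hOut]; ring
      rw [hy]
      have hafA : af k (ε v.1) (((x.2 - cδ).val : ℕ) : ZMod k)
          = af k (δ v.2) (((v.1 - cε).val : ℕ) : ZMod k) := by
        rw [hafx2, hC]; push_cast; ring
      have hδy := stepδ x.2 (ε v.1) (hpmε v.1)
      rw [hafA] at hδy
      have hεu := stepε v.1 (δ v.2) (hpmδ v.2)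
      refine ⟨Or.inr ⟨rfl, by rw [hty2]⟩, ?_⟩
      by_cases hA : af k (δ v.2) (((v.1 - cε).val : ℕ) : ZMod k) = -1
      · -- secondary shadow of u
        rw [if_pos hA] at hδy hεu
        right
        refine ⟨⟨r - 1, ?_, ?_⟩, ?_, ?_⟩
        · show x.1 = (vOut δ v).1 + (((r - 1) * δ (vOut δ v).2 : ℤ) : ZMod n)
          dsimp only [vOut]
          rw [hx1]; push_cast; ring
        · show x.2 + ((ε v.1 : ℤ) : ZMod n)
            = (vOut δ v).2 + (((r - 1) * ε (vOut δ v).1 : ℤ) : ZMod n)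
          dsimp only [vOut]
          rw [hεu, hx2]; push_cast; ring
        · show ty δ ε (x.1, x.2 + ((ε v.1 : ℤ) : ZMod n)) = -ty δ ε (vOut δ v)
          simp only [ty, Prod.mk.injEq, Prod.neg_mk]
          dsimp only [vOut]
          rw [hδy, hεu, hty1, hty2]
          constructor <;> ring
        · show VE δ ε (vOut δ v) = HE δ ε (x.1, x.2 + ((ε v.1 : ℤ) : ZMod n))
          rw [VEf, HEf]
          dsimp only [vOut]
          rw [hεu, af_neg (hpmε v.1), hC, hδy, hty1, af_neg (hpmδ v.2), hafx1]
      · -- main shadow of u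
        rw [if_neg hA] at hδy hεu
        left
        refine ⟨⟨r - 1, ?_, ?_⟩, ?_, ?_⟩
        · show x.1 = (vOut δ v).1 + (((r - 1) * δ (vOut δ v).2 : ℤ) : ZMod n)
          dsimp only [vOut]
          rw [hx1]; push_cast; ring
        · show x.2 + ((ε v.1 : ℤ) : ZMod n)
            = (vOut δ v).2 - (((r - 1) * ε (vOut δ v).1 : ℤ) : ZMod n)
          dsimp only [vOut]
          rw [hεu, hx2]; push_cast; ring
        · show ty δ ε (x.1, x.2 + ((ε v.1 : ℤ) : ZMod n)) = ty δ ε (vOut δ v)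
          simp only [ty, Prod.mk.injEq]
          dsimp only [vOut]
          rw [hδy, hεu, hty1, hty2]
          exact ⟨rfl, rfl⟩
        · show VE δ ε (vOut δ v) = HE δ ε (x.1, x.2 + ((ε v.1 : ℤ) : ZMod n))
          rw [VEf, HEf]
          dsimp only [vOut]
          rw [hεu, hC, hδy, hty1, hafx1]
    · -- Case B : u = hOut, w = vOut, y = (x.1 + δ v.2, x.2)
      subst hu hw
      have hy : x + (vOut δ v - v) = (x.1 + ((δ v.2 : ℤ) : ZMod n), x.2) := by
        rw [Prod.ext_iff]
        constructor
        · show x.1 + ((vOut δ v).1 - v.1) = x.1 + ((δ v.2 : ℤ) : ZMod n)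
          dsimp only [vOut]; ring
        · show x.2 + ((vOut δ v).2 - v.2) = x.2
          dsimp only [vOut]; ring
      rw [hy]
      have hεy := stepε x.1 (δ v.2) (hpmδ v.2)
      rw [hafx1] at hεy
      have hδu := stepδ v.2 (ε v.1) (hpmε v.1)
      rw [hC] at hδu
      have hafy1 : af k (δ v.2) (((x.1 + ((δ v.2 : ℤ) : ZMod n) - cε).val : ℕ) : ZMod k)
          = af k (δ v.2) (((x.1 - cε).val : ℕ) : ZMod k) + ((1 : ℤ) : ZMod k) := by
        rw [show ((δ v.2 : ℤ) : ZMod n) = ((1 * δ v.2 : ℤ) : ZMod n) by norm_num,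
          QE x.1 (1 * δ v.2)]
        exact af_shift (hpmδ v.2) 1 _
      have hafu2 : af k (ε v.1) (((v.2 + ((ε v.1 : ℤ) : ZMod n) - cδ).val : ℕ) : ZMod k)
          = af k (ε v.1) (((v.2 - cδ).val : ℕ) : ZMod k) + ((1 : ℤ) : ZMod k) := by
        rw [show ((ε v.1 : ℤ) : ZMod n) = ((1 * ε v.1 : ℤ) : ZMod n) by norm_num,
          QD v.2 (1 * ε v.1)]
        exact af_shift (hpmε v.1) 1 _
      refine ⟨Or.inl ⟨by rw [hty1], rfl⟩, ?_⟩
      by_cases hB : af k (δ v.2) (((v.1 - cε).val : ℕ) : ZMod k) + ((r : ℤ) : ZMod k)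
          = -1
      · -- secondary shadow of u
        rw [if_pos hB] at hεy hδu
        right
        refine ⟨⟨-(r + 1), ?_, ?_⟩, ?_, ?_⟩
        · show x.1 + ((δ v.2 : ℤ) : ZMod n)
            = (hOut ε v).1 + (((-(r + 1)) * δ (hOut ε v).2 : ℤ) : ZMod n)
          dsimp only [hOut]
          rw [hδu, hx1]; push_cast; ring
        · show x.2 = (hOut ε v).2 + (((-(r + 1)) * ε (hOut ε v).1 : ℤ) : ZMod n)
          dsimp only [hOut]
          rw [hx2]; push_cast; ring
        · show ty δ ε (x.1 + ((δ v.2 : ℤ) : ZMod n), x.2) = -ty δ ε (hOut ε v)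
          simp only [ty, Prod.mk.injEq, Prod.neg_mk]
          dsimp only [hOut]
          rw [hδu, hεy, hty1, hty2]
          constructor <;> ring
        · show VE δ ε (hOut ε v) = HE δ ε (x.1 + ((δ v.2 : ℤ) : ZMod n), x.2)
          rw [VEf, HEf]
          dsimp only [hOut]
          rw [hafu2, hC, hty1, hafy1, hafx1]
      · -- main shadow of u
        rw [if_neg hB] at hεy hδu
        left
        refine ⟨⟨r + 1, ?_, ?_⟩, ?_, ?_⟩
        · show x.1 + ((δ v.2 : ℤ) : ZMod n)
            = (hOut ε v).1 + (((r + 1) * δ (hOut ε v).2 : ℤ) : ZMod n)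
          dsimp only [hOut]
          rw [hδu, hx1]; push_cast; ring
        · show x.2 = (hOut ε v).2 - (((r + 1) * ε (hOut ε v).1 : ℤ) : ZMod n)
          dsimp only [hOut]
          rw [hx2]; push_cast; ring
        · show ty δ ε (x.1 + ((δ v.2 : ℤ) : ZMod n), x.2) = ty δ ε (hOut ε v)
          simp only [ty, Prod.mk.injEq]
          dsimp only [hOut]
          rw [hδu, hεy, hty1, hty2]
          exact ⟨rfl, rfl⟩
        · show VE δ ε (hOut ε v) = HE δ ε (x.1 + ((δ v.2 : ℤ) : ZMod n), x.2)
          rw [VEf, HEf]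
          dsimp only [hOut]
          rw [hafu2, hC, hty1, hafy1, hafx1]
  · -- secondary shadows of v
    rintro x ⟨⟨r, hx1, hx2⟩, hxty, hxVH⟩
    simp only [ty, Prod.mk.injEq, Prod.neg_mk] at hxty
    obtain ⟨hty1, hty2⟩ := hxty
    have hafx1 : af k (δ v.2) (((x.1 - cε).val : ℕ) : ZMod k)
        = af k (δ v.2) (((v.1 - cε).val : ℕ) : ZMod k) + ((r : ℤ) : ZMod k) := by
      rw [hx1, QE v.1 (r * δ v.2)]; exact af_shift (hpmδ v.2) r _
    have hafx2 : af k (ε v.1) (((x.2 - cδ).val : ℕ) : ZMod k)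
        = af k (ε v.1) (((v.2 - cδ).val : ℕ) : ZMod k) + ((r : ℤ) : ZMod k) := by
      rw [hx2, QD v.2 (r * ε v.1)]; exact af_shift (hpmε v.1) r _
    have hC : af k (ε v.1) (((v.2 - cδ).val : ℕ) : ZMod k)
        = -1 - (af k (δ v.2) (((v.1 - cε).val : ℕ) : ZMod k) + ((r : ℤ) : ZMod k)) := by
      rw [VEf v, HEf x, hty1, af_neg (hpmδ v.2), hafx1] at hxVH
      exact esc_inj hk hxVH
    rcases huw with ⟨hu, hw⟩ | ⟨hu, hw⟩
    · -- Case A : u = vOut, w = hOut, y = (x.1, x.2 - ε v.1)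
      subst hu hw
      have hy : x - (hOut ε v - v) = (x.1, x.2 + ((-ε v.1 : ℤ) : ZMod n)) := by
        rw [Prod.ext_iff]
        constructor
        · show x.1 - ((hOut ε v).1 - v.1) = x.1
          dsimp only [hOut]; ring
        · show x.2 - ((hOut ε v).2 - v.2) = x.2 + ((-ε v.1 : ℤ) : ZMod n)
          dsimp only [hOut]; push_cast; ring
      rw [hy]
      have hafA : af k (-ε v.1) (((x.2 - cδ).val : ℕ) : ZMod k)
          = af k (δ v.2) (((v.1 - cε).val : ℕ) : ZMod k) := by
        rw [af_neg (hpmε v.1), hafx2, hC]; push_cast; ring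
      have hδy := stepδ x.2 (-ε v.1) ((hpmε v.1).neg_s8)
      rw [hafA] at hδy
      have hεu := stepε v.1 (δ v.2) (hpmδ v.2)
      refine ⟨Or.inr ⟨rfl, by rw [hty2]⟩, ?_⟩
      by_cases hA : af k (δ v.2) (((v.1 - cε).val : ℕ) : ZMod k) = -1
      · -- main shadow of u
        rw [if_pos hA] at hδy hεu
        left
        refine ⟨⟨r - 1, ?_, ?_⟩, ?_, ?_⟩
        · show x.1 = (vOut δ v).1 + (((r - 1) * δ (vOut δ v).2 : ℤ) : ZMod n)
          dsimp only [vOut]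
          rw [hx1]; push_cast; ring
        · show x.2 + ((-ε v.1 : ℤ) : ZMod n)
            = (vOut δ v).2 - (((r - 1) * ε (vOut δ v).1 : ℤ) : ZMod n)
          dsimp only [vOut]
          rw [hεu, hx2]; push_cast; ring
        · show ty δ ε (x.1, x.2 + ((-ε v.1 : ℤ) : ZMod n)) = ty δ ε (vOut δ v)
          simp only [ty, Prod.mk.injEq]
          dsimp only [vOut]
          rw [hδy, hεu, hty1, hty2]
          constructor <;> ring
        · show VE δ ε (vOut δ v) = HE δ ε (x.1, x.2 + ((-ε v.1 : ℤ) : ZMod n))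
          rw [VEf, HEf]
          dsimp only [vOut]
          rw [hεu, af_neg (hpmε v.1), hC, hδy, hty1, neg_neg, hafx1]
          congr 2
          ring
      · -- secondary shadow of u
        rw [if_neg hA] at hδy hεu
        right
        refine ⟨⟨r - 1, ?_, ?_⟩, ?_, ?_⟩
        · show x.1 = (vOut δ v).1 + (((r - 1) * δ (vOut δ v).2 : ℤ) : ZMod n)
          dsimp only [vOut]
          rw [hx1]; push_cast; ring
        · show x.2 + ((-ε v.1 : ℤ) : ZMod n)
            = (vOut δ v).2 + (((r - 1) * ε (vOut δ v).1 : ℤ) : ZMod n)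
          dsimp only [vOut]
          rw [hεu, hx2]; push_cast; ring
        · show ty δ ε (x.1, x.2 + ((-ε v.1 : ℤ) : ZMod n)) = -ty δ ε (vOut δ v)
          simp only [ty, Prod.mk.injEq, Prod.neg_mk]
          dsimp only [vOut]
          rw [hδy, hεu, hty1, hty2]
          constructor <;> ring
        · show VE δ ε (vOut δ v) = HE δ ε (x.1, x.2 + ((-ε v.1 : ℤ) : ZMod n))
          rw [VEf, HEf]
          dsimp only [vOut]
          rw [hεu, hC, hδy, hty1, af_neg (hpmδ v.2), hafx1]
    · -- Case B : u = hOut, w = vOut, y = (x.1 - δ v.2, x.2)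
      subst hu hw
      have hy : x - (vOut δ v - v) = (x.1 + ((-δ v.2 : ℤ) : ZMod n), x.2) := by
        rw [Prod.ext_iff]
        constructor
        · show x.1 - ((vOut δ v).1 - v.1) = x.1 + ((-δ v.2 : ℤ) : ZMod n)
          dsimp only [vOut]; push_cast; ring
        · show x.2 - ((vOut δ v).2 - v.2) = x.2
          dsimp only [vOut]; ring
      rw [hy]
      have hafB : af k (-δ v.2) (((x.1 - cε).val : ℕ) : ZMod k)
          = -1 - (af k (δ v.2) (((v.1 - cε).val : ℕ) : ZMod k) + ((r : ℤ) : ZMod k)) := by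
        rw [af_neg (hpmδ v.2), hafx1]
      have hεy := stepε x.1 (-δ v.2) ((hpmδ v.2).neg_s8)
      rw [hafB] at hεy
      have hδu := stepδ v.2 (ε v.1) (hpmε v.1)
      rw [hC] at hδu
      have hafy1 : af k (-δ v.2) (((x.1 + ((-δ v.2 : ℤ) : ZMod n) - cε).val : ℕ) : ZMod k)
          = af k (-δ v.2) (((x.1 - cε).val : ℕ) : ZMod k) + ((1 : ℤ) : ZMod k) := by
        rw [show ((-δ v.2 : ℤ) : ZMod n) = ((1 * -δ v.2 : ℤ) : ZMod n) by norm_num,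
          QE x.1 (1 * -δ v.2)]
        exact af_shift ((hpmδ v.2).neg_s8) 1 _
      have hafu2 : af k (ε v.1) (((v.2 + ((ε v.1 : ℤ) : ZMod n) - cδ).val : ℕ) : ZMod k)
          = af k (ε v.1) (((v.2 - cδ).val : ℕ) : ZMod k) + ((1 : ℤ) : ZMod k) := by
        rw [show ((ε v.1 : ℤ) : ZMod n) = ((1 * ε v.1 : ℤ) : ZMod n) by norm_num,
          QD v.2 (1 * ε v.1)]
        exact af_shift (hpmε v.1) 1 _
      refine ⟨Or.inl ⟨by rw [hty1], rfl⟩, ?_⟩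
      by_cases hB : (-1 - (af k (δ v.2) (((v.1 - cε).val : ℕ) : ZMod k)
          + ((r : ℤ) : ZMod k)) : ZMod k) = -1
      · -- main shadow of u
        rw [if_pos hB] at hεy hδu
        left
        refine ⟨⟨1 - r, ?_, ?_⟩, ?_, ?_⟩
        · show x.1 + ((-δ v.2 : ℤ) : ZMod n)
            = (hOut ε v).1 + (((1 - r) * δ (hOut ε v).2 : ℤ) : ZMod n)
          dsimp only [hOut]
          rw [hδu, hx1]; push_cast; ring
        · show x.2 = (hOut ε v).2 - (((1 - r) * ε (hOut ε v).1 : ℤ) : ZMod n)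
          dsimp only [hOut]
          rw [hx2]; push_cast; ring
        · show ty δ ε (x.1 + ((-δ v.2 : ℤ) : ZMod n), x.2) = ty δ ε (hOut ε v)
          simp only [ty, Prod.mk.injEq]
          dsimp only [hOut]
          rw [hδu, hεy, hty1, hty2]
          constructor <;> ring
        · show VE δ ε (hOut ε v) = HE δ ε (x.1 + ((-δ v.2 : ℤ) : ZMod n), x.2)
          rw [VEf, HEf]
          dsimp only [hOut]
          rw [hafu2, hC, hty1, hafy1, hafB]
      · -- secondary shadow of u
        rw [if_neg hB] at hεy hδu
        right
        refine ⟨⟨r - 1, ?_, ?_⟩, ?_, ?_⟩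
        · show x.1 + ((-δ v.2 : ℤ) : ZMod n)
            = (hOut ε v).1 + (((r - 1) * δ (hOut ε v).2 : ℤ) : ZMod n)
          dsimp only [hOut]
          rw [hδu, hx1]; push_cast; ring
        · show x.2 = (hOut ε v).2 + (((r - 1) * ε (hOut ε v).1 : ℤ) : ZMod n)
          dsimp only [hOut]
          rw [hx2]; push_cast; ring
        · show ty δ ε (x.1 + ((-δ v.2 : ℤ) : ZMod n), x.2) = -ty δ ε (hOut ε v)
          simp only [ty, Prod.mk.injEq, Prod.neg_mk]
          dsimp only [hOut]
          rw [hδu, hεy, hty1, hty2]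
          constructor <;> ring
        · show VE δ ε (hOut ε v) = HE δ ε (x.1 + ((-δ v.2 : ℤ) : ZMod n), x.2)
          rw [VEf, HEf]
          dsimp only [hOut]
          rw [hafu2, hC, hty1, hafy1, hafB]

end CopsPaper
end

section
/- Let G be a k-regularly oriented toroidal grid C_n □ C_n with 2 ≤ k < n. If K and K' are maximal confluxes of G with τ(K) = −τ(K'), then the diagonal distance satisfies 𝔡(K,K') < n/k and 𝔡(K,K') is an even integer. -/
namespace CopsPaper

/-! ### Auxiliary lemmas for Statement 10 -/

lemma altF_pm (m : ℕ) (x : ZMod m) : altF m x = 1 ∨ altF m x = -1 := by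
  unfold altF; split <;> simp

lemma parity_pair {m : ℕ} (x y : ZMod m) (h : altF m x = -(altF m y)) :
    ((x.val : ZMod 2) + (y.val : ZMod 2)) = 1 := by
  unfold altF at h
  rw [← ZMod.natCast_mod x.val 2, ← ZMod.natCast_mod y.val 2]
  rcases Nat.mod_two_eq_zero_or_one x.val with hx | hx <;>
    rcases Nat.mod_two_eq_zero_or_one y.val with hy | hy <;>
    simp [hx, hy] at h ⊢ <;> omega

lemma altF_blk_eq {n k : ℕ} (hk : 0 < k) (hn : 0 < n) (hnk : 0 < n / k) (h2 : 2 ∣ n / k)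
    (f : ZMod n → ℤ) (c : ZMod n) (hf : BlockAltAt k f c) (x : ZMod n) :
    altF (n / k) (blk k c x) = f x := by
  haveI : NeZero n := ⟨hn.ne'⟩
  have hx : f x = if (x - c).val / k % 2 = 0 then 1 else -1 := by
    have h := hf (x - c).val
    rw [ZMod.natCast_val, ZMod.cast_id] at h
    rwa [show c + (x - c) = x by ring] at h
  rw [hx]
  unfold altF blk
  rw [ZMod.val_natCast, Nat.mod_mod_of_dvd _ h2]

lemma key_ddist {m : ℕ} (hm : 2 ≤ m) (hm2 : 2 ∣ m) (u u' : Vtx m)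
    (hty : ty (altF m) (altF m) u = -(ty (altF m) (altF m) u')) :
    ddist (altF m) (altF m) u u' < m ∧ Even (ddist (altF m) (altF m) u u') := by
  haveI : NeZero m := ⟨by omega⟩
  have h1 : altF m u.2 = -(altF m u'.2) := congrArg Prod.fst hty
  have h2 : altF m u.1 = -(altF m u'.1) := congrArg Prod.snd hty
  obtain ⟨sv, hsv⟩ : ∃ s : ZMod m, s =
      ((altF m u.2 : ℤ) : ZMod m) * (u'.1 - u.1) + ((altF m u.1 : ℤ) : ZMod m) * (u'.2 - u.2) :=
    ⟨_, rfl⟩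
  -- every element of the ddist set is congruent to sv mod m
  have hA : ∀ t : ℕ,
      (∃ d : ℤ × ℤ, IsType d ∧ Orth (ty (altF m) (altF m) u) d ∧
        u' ∈ MDs (altF m) (altF m) t u d) → (t : ZMod m) = sv := by
    rintro t ⟨d, ⟨hd1, hd2⟩, horth, hmem⟩
    simp only [MDs, MD, ty, Orth, Set.mem_setOf_eq] at horth hmem
    obtain ⟨r, hx, hy⟩ := hmem
    rw [hsv]
    rcases altF_pm m u.2 with ha | ha <;> rcases altF_pm m u.1 with hb | hb <;>
      rcases hd1 with hd1 | hd1 <;> rcases hd2 with hd2 | hd2 <;>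
      simp only [ha, hb, hd1, hd2] at hx hy horth ⊢ <;>
      first
        | (norm_num at horth; done)
        | (norm_num at hx hy ⊢ <;> push_cast at hx hy ⊢ <;>
           first
             | linear_combination hx + hy
             | linear_combination hx - hy
             | linear_combination -hx + hy
             | linear_combination -hx - hy
             | linear_combination hx
             | linear_combination -hx
             | linear_combination hy
             | linear_combination -hy)
  -- sv.val belongs to the ddist set
  have hz : (((u.2 - u'.2).val : ℕ) : ZMod m) = u.2 - u'.2 := by
    rw [ZMod.natCast_val, ZMod.cast_id]
  have hB : ∃ d : ℤ × ℤ, IsType d ∧ Orth (ty (altF m) (altF m) u) d ∧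
      u' ∈ MDs (altF m) (altF m) sv.val u d := by
    refine ⟨(altF m u.2, -(altF m u.1)), ?_, ?_, ?_⟩
    · constructor <;> rcases altF_pm m u.2 with ha | ha <;>
        rcases altF_pm m u.1 with hb | hb <;> simp [ha, hb]
    · show (ty (altF m) (altF m) u).1 * (altF m u.2) +
        (ty (altF m) (altF m) u).2 * (-(altF m u.1)) = 0
      simp only [ty]
      rcases altF_pm m u.2 with ha | ha <;> rcases altF_pm m u.1 with hb | hb <;>
        rw [ha, hb] <;> ring
    · simp only [MDs, MD, ty, Set.mem_setOf_eq]
      refine ⟨(altF m u.1) * ((u.2 - u'.2).val : ℤ), ?_, ?_⟩ <;>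
        rcases altF_pm m u.2 with ha | ha <;> rcases altF_pm m u.1 with hb | hb <;>
        simp only [ha, hb] at hsv ⊢ <;>
        norm_num <;> push_cast [hz] at hsv ⊢ <;>
        first
          | linear_combination hsv + hz
          | linear_combination hsv - hz
          | linear_combination -hsv + hz
          | linear_combination -hsv - hz
          | linear_combination hz
          | linear_combination -hz
          | linear_combination hsv
          | linear_combination -hsv
          | linear_combination (0 : ZMod m) = 0
  have hdd : ddist (altF m) (altF m) u u' = sv.val := by
    unfold ddist
    refine le_antisymm (Nat.sInf_le hB) (le_csInf ⟨_, hB⟩ ?_)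
    intro t ht
    have h := hA t ht
    have h' : sv.val = t % m := by rw [← h, ZMod.val_natCast]
    have := Nat.mod_le t m
    omega
  rw [hdd]
  refine ⟨ZMod.val_lt sv, ?_⟩
  -- parity
  have hpar1 := parity_pair u.1 u'.1 h2
  have hpar2 := parity_pair u.2 u'.2 h1
  have hcast : ((sv.val : ℕ) : ZMod 2) = 0 := by
    have hφ : ((sv.val : ℕ) : ZMod 2) = (ZMod.castHom hm2 (ZMod 2)) sv := by
      rw [ZMod.castHom_apply, ← ZMod.natCast_val]
    rw [hφ, hsv, map_add, map_mul, map_mul, map_sub, map_sub, map_intCast, map_intCast,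
      ZMod.castHom_apply, ZMod.castHom_apply, ZMod.castHom_apply, ZMod.castHom_apply,
      ← ZMod.natCast_val, ← ZMod.natCast_val, ← ZMod.natCast_val, ← ZMod.natCast_val]
    have key : ∀ c1 c2 x x' y y' : ZMod 2, x + x' = 1 → y + y' = 1 →
        c1 = 1 → c2 = 1 → c1 * (x' - x) + c2 * (y' - y) = 0 := by decide
    refine key _ _ _ _ _ _ hpar1 hpar2 ?_ ?_
    · rcases altF_pm m u.2 with ha | ha <;> rw [ha] <;> first | decide | norm_num
    · rcases altF_pm m u.1 with hb | hb <;> rw [hb] <;> first | decide | norm_num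
  rw [even_iff_two_dvd]
  exact (CharP.cast_eq_zero_iff (ZMod 2) 2 sv.val).mp hcast

/-- (Observation `evendd`.)  If `K, K'` are maximal
confluxes of a `k`-regularly oriented grid of opposite types, then their
diagonal distance (measured in the conflux digraph, a 1-regularly oriented
grid on `(ZMod (n/k))²`) is an even number smaller than `n / k`. -/
theorem diag_dist_lt_and_even
    (n k : ℕ) (hk : 2 ≤ k) (hkn : k < n) (hdvd : 2 * k ∣ n)
    (δ ε : ZMod n → ℤ) (cδ cε : ZMod n)
    (hδ : BlockAltAt k δ cδ) (hε : BlockAltAt k ε cε)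
    (v v' : Vtx n)
    (hτ : ty δ ε v = -(ty δ ε v')) :
    ddist (altF (n / k)) (altF (n / k)) (confMap k cδ cε v) (confMap k cδ cε v') < n / k ∧
    Even (ddist (altF (n / k)) (altF (n / k)) (confMap k cδ cε v) (confMap k cδ cε v')) := by
  obtain ⟨q, hq⟩ := hdvd
  have hk0 : 0 < k := by omega
  have hq1 : 1 ≤ q := by
    rcases Nat.eq_zero_or_pos q with h | h
    · subst h; omega
    · exact h
  have hm : n / k = 2 * q := by
    rw [hq, show 2 * k * q = k * (2 * q) by ring, Nat.mul_div_cancel_left _ hk0]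
  have hm2 : 2 ≤ n / k := by omega
  have hdvd2 : 2 ∣ n / k := ⟨q, hm⟩
  have hn0 : 0 < n := by omega
  have hteq : ∀ p : Vtx n,
      ty (altF (n / k)) (altF (n / k)) (confMap k cδ cε p) = ty δ ε p := by
    intro p
    show (altF (n / k) (blk k cδ p.2), altF (n / k) (blk k cε p.1)) = (δ p.2, ε p.1)
    rw [altF_blk_eq hk0 hn0 (by omega) hdvd2 δ cδ hδ p.2,
      altF_blk_eq hk0 hn0 (by omega) hdvd2 ε cε hε p.1]
  have hty : ty (altF (n / k)) (altF (n / k)) (confMap k cδ cε v) =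
      -(ty (altF (n / k)) (altF (n / k)) (confMap k cδ cε v')) := by
    rw [hteq v, hteq v']; exact hτ
  exact key_ddist hm2 hdvd2 _ _ hty


end CopsPaper
end
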